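/- arXiv:2203.10650 — 10 statements merged into one kernel-verified Lean document; each statement's English description precedes it below -/
import Mathlib

section
/- Let H be a separable complex Hilbert space, R and R₁ bounded self-adjoint operators on H with ker R = {0}, q ∈ H with ‖q‖ ≤ 1, p = Rq, and assume R² − R₁² = pp*. Let Σ* be the unique contraction on H with R₁ = Σ*R, assume Σ* is asymptotically stable, and let Γ be the unique Hankel operator on ℓ² such that the pair (Γ|₍ker Γ₎^⊥, (ΓS)|₍ker Γ₎^⊥) is unitarily equivalent to (R, R₁). Then ker Γ = {0} if and only if ‖q‖ = 1 and q ∉ Ran R. -/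
/-!
Let `u ∈ H` correspond under the unitary equivalence to the orthogonal projection of `e₀` onto
`(ker Γ)ᗮ`. Since `S S* = 1 - e₀ e₀*`, the Hankel relation `ΓS = S*Γ` turns `R² - R₁²` into the
rank-one operator `(Ru)(Ru)*`; comparing with `pp*` gives `Ru = μ p` with `|μ| = 1`, so `u = μ q`.
Hence `‖q‖ = 1` iff `e₀ ⊥ ker Γ`, and in that case `q ∈ Ran R` iff `e₀ ∈ Ran Γ`.

It remains to see that a Hankel operator is injective iff `e₀ ⊥ ker Γ` and `e₀ ∉ Ran Γ`. If
`Γ z = e₀` then `Γ S z = S* e₀ = 0`. Conversely, for `g ∈ ker Γ` we get `S S* g = g`, so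
`S* Γ S* g = Γ g = 0` and `Γ S* g ∈ ker S* = ℂ e₀`, which forces `Γ S* g = 0`. Thus `ker Γ` is
`S*`-invariant and orthogonal to `e₀`, so `⟪eₙ, g⟫ = ⟪e₀, (S*)ⁿ g⟫ = 0` for all `n`.
-/

open Filter Topology ContinuousLinearMap
open InnerProductSpace
open scoped InnerProductSpace

theorem HilbertBasis.eq_zero_of_forall_inner_eq_zero {ι 𝕜 E : Type*} [RCLike 𝕜]
    [NormedAddCommGroup E] [InnerProductSpace 𝕜 E] (b : HilbertBasis ι 𝕜 E) {x : E}
    (h : ∀ i, ⟪b i, x⟫_𝕜 = 0) : x = 0 :=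
  b.repr.injective <| by ext i; simp [b.repr_apply_apply, h]

theorem exists_norm_eq_one_smul_of_rankOne_self_eq {𝕜 E : Type*} [RCLike 𝕜]
    [NormedAddCommGroup E] [InnerProductSpace 𝕜 E] {p p' : E}
    (h : rankOne 𝕜 p p = rankOne 𝕜 p' p') :
    ∃ μ : 𝕜, ‖μ‖ = 1 ∧ p' = μ • p := by
  rcases eq_or_ne p 0 with rfl | hp
  · refine ⟨1, norm_one, ?_⟩
    simpa [eq_comm (a := (0 : E →L[𝕜] E))] using h
  obtain ⟨α, -, -, -, hpα, -⟩ := exists_of_rankOne_eq_rankOne hp hp h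
  have hnorm : ‖p'‖ = ‖p‖ := by
    have := congrArg norm h.symm
    simp only [norm_rankOne] at this
    nlinarith [norm_nonneg p, norm_nonneg p']
  refine ⟨α⁻¹, ?_, by rw [hpα, inv_smul_smul₀ (by rintro rfl; simp_all)]⟩
  have : ‖α‖ * ‖p‖ = ‖p‖ := by rw [← hnorm, ← norm_smul, ← hpα, hnorm]
  rw [norm_inv, mul_left_eq_self₀.mp this |>.resolve_right (norm_ne_zero_iff.mpr hp), inv_one]

section Shift

variable {E : Type*} [NormedAddCommGroup E] [InnerProductSpace ℂ E] [CompleteSpace E]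
  (e : HilbertBasis ℕ ℂ E) {S : E →L[ℂ] E}

theorem adjoint_apply_zero_of_shift (hS : ∀ n, S (e n) = e (n + 1)) : adjoint S (e 0) = 0 :=
  e.eq_zero_of_forall_inner_eq_zero fun n ↦ by
    rw [adjoint_inner_right, hS, e.orthonormal.inner_eq_zero (by omega)]

theorem inner_adjoint_pow_of_shift (hS : ∀ n, S (e n) = e (n + 1)) (n : ℕ) (x : E) :
    ⟪e 0, (adjoint S ^ n) x⟫_ℂ = ⟪e n, x⟫_ℂ := by
  induction n generalizing x with
  | zero => simp
  | succ n ih => rw [pow_succ, mul_apply_eq_comp, ih, adjoint_inner_right, hS]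

theorem apply_adjoint_of_shift (hS_iso : ∀ x, ‖S x‖ = ‖x‖) (hS : ∀ n, S (e n) = e (n + 1))
    (a : E) : S (adjoint S a) = a - ⟪e 0, a⟫_ℂ • e 0 := by
  refine sub_eq_zero.mp (e.eq_zero_of_forall_inner_eq_zero fun n ↦ ?_)
  rw [inner_sub_right, inner_sub_right, inner_smul_right]
  rcases n with _ | n
  · rw [← adjoint_inner_left, adjoint_apply_zero_of_shift e hS, inner_self_eq_norm_sq_to_K,
      e.orthonormal.1 0]
    simp
  · rw [← hS, (LinearMap.norm_map_iff_inner_map_map S).mp hS_iso, adjoint_inner_right, hS,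
      e.orthonormal.inner_eq_zero (by omega)]
    simp

theorem inner_adjoint_adjoint_of_shift (hS_iso : ∀ x, ‖S x‖ = ‖x‖)
    (hS : ∀ n, S (e n) = e (n + 1)) (a b : E) :
    ⟪adjoint S a, adjoint S b⟫_ℂ = ⟪a, b⟫_ℂ - ⟪a, e 0⟫_ℂ * ⟪e 0, b⟫_ℂ := by
  rw [adjoint_inner_right, apply_adjoint_of_shift e hS_iso hS, inner_sub_left, inner_smul_left,
    inner_conj_symm]

theorem eq_smul_of_adjoint_eq_zero_of_shift (hS_iso : ∀ x, ‖S x‖ = ‖x‖)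
    (hS : ∀ n, S (e n) = e (n + 1)) {a : E} (ha : adjoint S a = 0) : a = ⟪e 0, a⟫_ℂ • e 0 := by
  have h := apply_adjoint_of_shift e hS_iso hS a
  rwa [ha, map_zero, eq_comm, sub_eq_zero] at h

end Shift

section Hankel

variable {E : Type*} [NormedAddCommGroup E] [InnerProductSpace ℂ E] [CompleteSpace E]
  (e : HilbertBasis ℕ ℂ E) {S Γ : E →L[ℂ] E}

theorem adjoint_mem_ker_of_hankel (hS_iso : ∀ x, ‖S x‖ = ‖x‖) (hS : ∀ n, S (e n) = e (n + 1))
    (hΓ : Γ ∘L S = adjoint S ∘L Γ) (he : e 0 ∈ (LinearMap.ker (Γ : E →ₗ[ℂ] E))ᗮ)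
    (hran : e 0 ∉ LinearMap.range (Γ : E →ₗ[ℂ] E)) {g : E}
    (hg : g ∈ LinearMap.ker (Γ : E →ₗ[ℂ] E)) :
    adjoint S g ∈ LinearMap.ker (Γ : E →ₗ[ℂ] E) := by
  have hg0 : ⟪e 0, g⟫_ℂ = 0 := Submodule.inner_left_of_mem_orthogonal hg he
  have hSS : S (adjoint S g) = g := by
    rw [apply_adjoint_of_shift e hS_iso hS, hg0, zero_smul, sub_zero]
  have hΓS : adjoint S (Γ (adjoint S g)) = 0 := by
    rw [← comp_apply, ← hΓ, comp_apply, hSS]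
    exact hg
  have hspan := eq_smul_of_adjoint_eq_zero_of_shift e hS_iso hS hΓS
  show Γ (adjoint S g) = 0
  set c := ⟪e 0, Γ (adjoint S g)⟫_ℂ
  by_contra hne
  have hc : c ≠ 0 := fun hc ↦ hne (by rw [hspan, hc, zero_smul])
  refine hran ⟨c⁻¹ • adjoint S g, ?_⟩
  rw [map_smul, coe_coe, hspan, smul_smul, inv_mul_cancel₀ hc, one_smul]

theorem ker_eq_bot_iff_of_hankel (hS_iso : ∀ x, ‖S x‖ = ‖x‖) (hS : ∀ n, S (e n) = e (n + 1))
    (hΓ : Γ ∘L S = adjoint S ∘L Γ) :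
    LinearMap.ker (Γ : E →ₗ[ℂ] E) = ⊥ ↔
      e 0 ∈ (LinearMap.ker (Γ : E →ₗ[ℂ] E))ᗮ ∧ e 0 ∉ LinearMap.range (Γ : E →ₗ[ℂ] E) := by
  constructor
  · intro hker
    refine ⟨by simp [hker], ?_⟩
    rintro ⟨z, hz : Γ z = e 0⟩
    have hSz : S z ∈ LinearMap.ker (Γ : E →ₗ[ℂ] E) := by
      change Γ (S z) = 0
      rw [← comp_apply, hΓ, comp_apply, hz, adjoint_apply_zero_of_shift e hS]
    rw [hker, Submodule.mem_bot, ← norm_eq_zero, hS_iso, norm_eq_zero] at hSz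
    exact e.orthonormal.ne_zero 0 (by rw [← hz, hSz, map_zero])
  · rintro ⟨he, hran⟩
    refine (Submodule.eq_bot_iff _).mpr fun h hh ↦ e.eq_zero_of_forall_inner_eq_zero fun n ↦ ?_
    have hpow : (adjoint S ^ n) h ∈ LinearMap.ker (Γ : E →ₗ[ℂ] E) := by
      induction n with
      | zero => exact hh
      | succ n ih =>
        rw [pow_succ', mul_apply_eq_comp]
        exact adjoint_mem_ker_of_hankel e hS_iso hS hΓ he hran ih
    rw [← inner_adjoint_pow_of_shift e hS]
    exact Submodule.inner_left_of_mem_orthogonal hpow he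

end Hankel

section UnitaryModel

variable {E H : Type*} [NormedAddCommGroup E] [InnerProductSpace ℂ E]
  [NormedAddCommGroup H] [InnerProductSpace ℂ H]

theorem inner_coe_linearIsometryEquiv_apply {K : Submodule ℂ E} [K.HasOrthogonalProjection]
    (V : H ≃ₗᵢ[ℂ] K) (y : E) (x : H) :
    ⟪y, (V x : E)⟫_ℂ = ⟪V.symm (K.orthogonalProjectionOnto y), x⟫_ℂ := by
  rw [← K.inner_orthogonalProjectionOnto_eq_of_mem_right, ← V.inner_map_map, V.apply_symm_apply]

theorem mem_iff_norm_symm_orthogonalProjectionOnto {K : Submodule ℂ E}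
    [K.HasOrthogonalProjection] (V : H ≃ₗᵢ[ℂ] K) (y : E) :
    y ∈ K ↔ ‖V.symm (K.orthogonalProjectionOnto y)‖ = ‖y‖ := by
  rw [V.symm.norm_map, K.mem_iff_norm_starProjection]
  rfl

theorem comp_self_sub_comp_self_eq_rankOne_of_intertwining [CompleteSpace E] [CompleteSpace H]
    (e : HilbertBasis ℕ ℂ E) {S Γ : E →L[ℂ] E}
    (hS_iso : ∀ x, ‖S x‖ = ‖x‖) (hS : ∀ n, S (e n) = e (n + 1)) (hΓ : Γ ∘L S = adjoint S ∘L Γ)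
    {R R₁ : H →L[ℂ] H} (hR : IsSelfAdjoint R) (hR₁ : IsSelfAdjoint R₁) {K : Submodule ℂ E}
    [K.HasOrthogonalProjection] (V : H ≃ₗᵢ[ℂ] K) (hVR : ∀ x, Γ (V x) = V (R x))
    (hVR₁ : ∀ x, (Γ ∘L S) (V x) = V (R₁ x)) :
    R ∘L R - R₁ ∘L R₁ =
      rankOne ℂ (R (V.symm (K.orthogonalProjectionOnto (e 0))))
        (R (V.symm (K.orthogonalProjectionOnto (e 0)))) := by
  set u := V.symm (K.orthogonalProjectionOnto (e 0))
  have hRsymm (x y : H) : ⟪R x, y⟫_ℂ = ⟪x, R y⟫_ℂ := hR.isSymmetric x y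
  have hR₁symm (x y : H) : ⟪R₁ x, y⟫_ℂ = ⟪x, R₁ y⟫_ℂ := hR₁.isSymmetric x y
  have hinner (x : H) : ⟪e 0, (V (R x) : E)⟫_ℂ = ⟪R u, x⟫_ℂ := by
    rw [inner_coe_linearIsometryEquiv_apply, hRsymm]
  refine ext fun x ↦ ext_inner_left ℂ fun y ↦ ?_
  calc ⟪y, (R ∘L R - R₁ ∘L R₁) x⟫_ℂ
      = ⟪(V (R y) : E), V (R x)⟫_ℂ - ⟪(V (R₁ y) : E), V (R₁ x)⟫_ℂ := by
        rw [sub_apply, inner_sub_right, comp_apply, comp_apply, ← hRsymm, ← hR₁symm,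
          ← Submodule.coe_inner, ← Submodule.coe_inner, V.inner_map_map, V.inner_map_map]
    _ = ⟪Γ (V y), Γ (V x)⟫_ℂ - ⟪adjoint S (Γ (V y)), adjoint S (Γ (V x))⟫_ℂ := by
        rw [← hVR, ← hVR, ← hVR₁, ← hVR₁, hΓ, comp_apply, comp_apply]
    _ = ⟪(V (R y) : E), e 0⟫_ℂ * ⟪e 0, (V (R x) : E)⟫_ℂ := by
        rw [inner_adjoint_adjoint_of_shift e hS_iso hS, hVR, hVR]
        ring
    _ = ⟪y, rankOne ℂ (R u) (R u) x⟫_ℂ := by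
        rw [← inner_conj_symm, hinner, hinner, inner_conj_symm, rankOne_apply,
          inner_smul_right, mul_comm]

theorem mem_range_iff_of_intertwining {Γ : E →L[ℂ] E} {R : H →L[ℂ] H} {K : Submodule ℂ E}
    [K.HasOrthogonalProjection] (hK : Kᗮ ≤ LinearMap.ker (Γ : E →ₗ[ℂ] E)) (V : H ≃ₗᵢ[ℂ] K)
    (hVR : ∀ x, Γ (V x) = V (R x)) {y : E} (hy : y ∈ K) :
    y ∈ LinearMap.range (Γ : E →ₗ[ℂ] E) ↔
      V.symm (K.orthogonalProjectionOnto y) ∈ LinearMap.range (R : H →ₗ[ℂ] H) := by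
  rw [K.orthogonalProjectionOnto_mem_subspace_eq_self ⟨y, hy⟩]
  constructor
  · rintro ⟨z, hz : Γ z = y⟩
    have hΓz : Γ (K.starProjection z) = y := by
      rw [← hz, eq_comm, ← sub_eq_zero, ← map_sub]
      exact hK (K.sub_starProjection_mem_orthogonal z)
    refine ⟨V.symm (K.orthogonalProjectionOnto z), V.injective (Subtype.ext ?_)⟩
    rw [coe_coe, ← hVR, V.apply_symm_apply, V.apply_symm_apply]
    exact hΓz
  · rintro ⟨w, hw⟩
    refine ⟨V w, ?_⟩
    change Γ (V w) = y
    rw [hVR, ← coe_coe, hw, V.apply_symm_apply]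

end UnitaryModel

theorem statement_3_general
    {E : Type*} [NormedAddCommGroup E] [InnerProductSpace ℂ E] [CompleteSpace E]
    (e : HilbertBasis ℕ ℂ E)
    (S : E →L[ℂ] E)
    (hS_iso : ∀ x : E, ‖S x‖ = ‖x‖)
    (hS_shift : ∀ n : ℕ, S (e n) = e (n + 1))
    {H : Type*} [NormedAddCommGroup H] [InnerProductSpace ℂ H] [CompleteSpace H]
    (R R₁ : H →L[ℂ] H)
    (hR_sa : IsSelfAdjoint R) (hR1_sa : IsSelfAdjoint R₁)
    (hR_ker : LinearMap.ker (R : H →ₗ[ℂ] H) = ⊥)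
    (q : H) (p : H) (hp : p = R q)
    (hRR1 : R ∘L R - R₁ ∘L R₁ = (innerSL ℂ p).smulRight p)
    (Γ : E →L[ℂ] E)
    (hΓ_Hankel : Γ ∘L S = adjoint S ∘L Γ)
    (hV : ∃ V : H ≃ₗᵢ[ℂ] ((LinearMap.ker (Γ : E →ₗ[ℂ] E))ᗮ),
      (∀ x : H, Γ ↑(V x) = ↑(V (R x))) ∧
      (∀ x : H, (Γ ∘L S) ↑(V x) = ↑(V (R₁ x)))) :
    LinearMap.ker (Γ : E →ₗ[ℂ] E) = ⊥ ↔ (‖q‖ = 1 ∧ q ∉ LinearMap.range (R : H →ₗ[ℂ] H)) := by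
  obtain ⟨V, hVR, hVR₁⟩ := hV
  have hK : (LinearMap.ker (Γ : E →ₗ[ℂ] E))ᗮᗮ ≤ LinearMap.ker (Γ : E →ₗ[ℂ] E) := by
    rw [Submodule.orthogonal_orthogonal_eq_closure,
      (isClosed_ker Γ).submodule_topologicalClosure_eq]
  obtain ⟨μ, hμ, hRu⟩ := exists_norm_eq_one_smul_of_rankOne_self_eq <| hRR1.symm.trans <|
    comp_self_sub_comp_self_eq_rankOne_of_intertwining e hS_iso hS_shift hΓ_Hankel hR_sa hR1_sa
      V hVR hVR₁
  have hu : V.symm ((LinearMap.ker (Γ : E →ₗ[ℂ] E))ᗮ.orthogonalProjectionOnto (e 0)) = μ • q :=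
    LinearMap.ker_eq_bot.mp hR_ker (by simpa [hp] using hRu)
  have hμ0 : μ ≠ 0 := by rintro rfl; simp at hμ
  have he : e 0 ∈ (LinearMap.ker (Γ : E →ₗ[ℂ] E))ᗮ ↔ ‖q‖ = 1 := by
    rw [mem_iff_norm_symm_orthogonalProjectionOnto V, hu, norm_smul, hμ, one_mul,
      e.orthonormal.1 0]
  rw [ker_eq_bot_iff_of_hankel e hS_iso hS_shift hΓ_Hankel, ← he]
  refine and_congr_right fun he ↦ not_congr ?_
  rw [mem_range_iff_of_intertwining hK V hVR he, hu]
  exact Submodule.smul_mem_iff _ hμ0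

/-- Setup as in Statement 2: `H` separable complex Hilbert space, `R`, `R₁`
self-adjoint with `ker R = {0}`, `‖q‖ ≤ 1`, `p = Rq`, `R² − R₁² = pp*`, `Σ*` the unique
contraction with `R₁ = Σ*R`, asymptotically stable, and `Γ` the (unique) Hankel operator on
`ℓ²` (modelled abstractly via a Hilbert space `E` with orthonormal basis `e` and forward
shift `S`) such that `(Γ|_{(ker Γ)ᗮ}, (ΓS)|_{(ker Γ)ᗮ})` is unitarily equivalent to
`(R, R₁)`. Then `ker Γ = {0}` iff `‖q‖ = 1` and `q ∉ Ran R`. -/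
theorem statement_3
    {E : Type*} [NormedAddCommGroup E] [InnerProductSpace ℂ E] [CompleteSpace E]
    (e : HilbertBasis ℕ ℂ E)
    (S : E →L[ℂ] E)
    (hS_iso : ∀ x : E, ‖S x‖ = ‖x‖)
    (hS_shift : ∀ n : ℕ, S (e n) = e (n + 1))
    {H : Type*} [NormedAddCommGroup H] [InnerProductSpace ℂ H] [CompleteSpace H]
    [TopologicalSpace.SeparableSpace H]
    (R R₁ : H →L[ℂ] H)
    (hR_sa : IsSelfAdjoint R) (hR1_sa : IsSelfAdjoint R₁)
    (hR_ker : LinearMap.ker (R : H →ₗ[ℂ] H) = ⊥)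
    (q : H) (hq : ‖q‖ ≤ 1) (p : H) (hp : p = R q)
    (hRR1 : R ∘L R - R₁ ∘L R₁ = (innerSL ℂ p).smulRight p)
    (Sstar : H →L[ℂ] H) (hSstar_contr : ‖Sstar‖ ≤ 1) (hSstar : R₁ = Sstar ∘L R)
    (hstable : ∀ x : H, Tendsto (fun n : ℕ => ‖(Sstar ^ n) x‖) atTop (nhds 0))
    (Γ : E →L[ℂ] E)
    (hΓ_Hankel : Γ ∘L S = adjoint S ∘L Γ)
    (hV : ∃ V : H ≃ₗᵢ[ℂ] ((LinearMap.ker (Γ : E →ₗ[ℂ] E))ᗮ),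
      (∀ x : H, Γ ↑(V x) = ↑(V (R x))) ∧
      (∀ x : H, (Γ ∘L S) ↑(V x) = ↑(V (R₁ x)))) :
    LinearMap.ker (Γ : E →ₗ[ℂ] E) = ⊥ ↔ (‖q‖ = 1 ∧ q ∉ LinearMap.range (R : H →ₗ[ℂ] H)) :=
  statement_3_general e S hS_iso hS_shift R R₁ hR_sa hR1_sa hR_ker q p hp hRR1 Γ hΓ_Hankel hV
end

section
/- Let H be a separable complex Hilbert space, R and R₁ compact self-adjoint operators on H with ker R = {0}, q ∈ H with ‖q‖ ≤ 1, p = Rq, and assume R₁² = R² − pp*. Suppose the non-zero eigenvalues (λₖ)ₖ≥₁ of R and (μₖ)ₖ≥₁ of R₁ are all simple and satisfy the strict intertwining relations |λ₁| > |μ₁| > |λ₂| > |μ₂| > … > 0. Then the vector p is cyclic for R² (the closed linear span of {(R²)ⁿp : n ≥ 0} is all of H), and the unique contraction Σ* with R₁ = Σ*R is asymptotically stable, i.e. (Σ*)ⁿx → 0 in norm for every x ∈ H. -/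
/-!
Cyclicity. The orthogonal complement of the closed span of the `(R²)ⁿ p` is invariant under the
compact self-adjoint operator `R²`. If it were nonzero it would contain an eigenvector `e` of `R²`
with an eigenvalue `c² ≠ 0`; since `e ⊥ p`, also `R₁² e = c² e`. Then `c` or `-c` is an eigenvalue
of `R`, and likewise of `R₁`, so `|c|` is both some `|λₙ|` and some `|μₘ|`, which the strict
interlacing forbids.

Stability. Write `T = Σ*`. Self-adjointness of `R₁ = TR` gives `TR = RT*`, and comparing
`R₁*R₁ = R T*T R` with `R² - pp* = R (1 - qq*) R` gives `T*T = 1 - qq*`, i.e.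
`‖Ty‖² = ‖y‖² - |(y, q)|²`. For `u ∈ H` the points `Tⁿ R u = R T*ⁿ u` lie in a compact set and their
norms decrease to some `c`. Limits of shifted orbits along one ultrafilter on `ℤ` yield a
bi-infinite `T`-orbit `v` of constant norm `c`, hence orthogonal to `q`. On it `T*` inverts `T`,
so `m ↦ R v(m)` is a `T`-orbit running backwards, whose inner products with `q` tend to `0`;
taking shifted limits again makes them vanish. Iterating and passing to a diagonal limit gives
`w` with `‖w‖ = c` and `(Rᵏ w, q) = 0` for all `k`, so `w ⊥ (R²)ⁿ p` for all `n`. By cyclicity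
`w = 0`, so `c = 0`. Finally `Tⁿ → 0` on the dense range of `R` and `‖T‖ ≤ 1`.
-/

open Filter Topology ContinuousLinearMap
open scoped InnerProductSpace

theorem ne_of_interlace {α : Type*} [Preorder α] {a b : ℕ → α} (hba : ∀ n, b n < a n)
    (hab : ∀ n, a (n + 1) < b n) (n m : ℕ) : a n ≠ b m := by
  have ha : StrictAnti a := strictAnti_nat_of_succ_lt fun n => (hab n).trans (hba n)
  have hb : StrictAnti b := strictAnti_nat_of_succ_lt fun n => (hba (n + 1)).trans (hab n)
  intro h
  rcases le_or_gt n m with hnm | hmn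
  · exact (h ▸ (hb.antitone hnm).trans_lt (hba n)).false
  · exact (h ▸ (ha.antitone (Nat.succ_le_of_lt hmn)).trans_lt (hab m)).false

theorem Module.End.hasEigenvalue_or_hasEigenvalue_neg {K V : Type*} [Field K] [AddCommGroup V]
    [Module K V] {f : Module.End K V} {c : K} {w : V} (hw : w ≠ 0)
    (h : f (f w) = (c * c) • w) : f.HasEigenvalue c ∨ f.HasEigenvalue (-c) := by
  by_cases h0 : f w + c • w = 0
  · refine Or.inr (hasEigenvalue_of_hasEigenvector ⟨mem_eigenspace_iff.2 ?_, hw⟩)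
    rw [neg_smul, eq_neg_of_add_eq_zero_left h0]
  · refine Or.inl (hasEigenvalue_of_hasEigenvector ⟨mem_eigenspace_iff.2 ?_, h0⟩)
    rw [map_add, map_smul, h, smul_add, smul_smul, add_comm]

theorem Module.End.exists_norm_eq_abs_of_apply_apply {V : Type*} [AddCommGroup V] [Module ℂ V]
    {f : Module.End ℂ V} {ν : ℕ → ℝ} (hν : ∀ z : ℂ, z ≠ 0 → f.HasEigenvalue z → ∃ n, z = ν n)
    {c : ℂ} (hc : c ≠ 0) {w : V} (hw : w ≠ 0) (h : f (f w) = (c * c) • w) :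
    ∃ n, ‖c‖ = |ν n| := by
  rcases hasEigenvalue_or_hasEigenvalue_neg hw h with hev | hev
  · obtain ⟨n, hn⟩ := hν c hc hev
    exact ⟨n, by rw [hn, Complex.norm_real, Real.norm_eq_abs]⟩
  · obtain ⟨n, hn⟩ := hν (-c) (neg_ne_zero.2 hc) hev
    exact ⟨n, by rw [← norm_neg, hn, Complex.norm_real, Real.norm_eq_abs]⟩

theorem apply_apply_ne_of_interlace {V : Type*} [AddCommGroup V] [Module ℂ V]
    {A B : Module.End ℂ V} {lam mu : ℕ → ℝ} (h1 : ∀ n, |mu n| < |lam n|)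
    (h2 : ∀ n, |lam (n + 1)| < |mu n|)
    (hA : ∀ z : ℂ, z ≠ 0 → A.HasEigenvalue z → ∃ n, z = lam n)
    (hB : ∀ z : ℂ, z ≠ 0 → B.HasEigenvalue z → ∃ n, z = mu n) {μ : ℂ} (hμ : μ ≠ 0) {e : V}
    (he : e ≠ 0) (hAe : A (A e) = μ • e) : B (B e) ≠ μ • e := by
  intro hBe
  obtain ⟨c, rfl⟩ := IsAlgClosed.exists_eq_mul_self μ
  have hc : c ≠ 0 := by
    rintro rfl
    exact hμ (zero_mul 0)
  obtain ⟨n, hn⟩ := Module.End.exists_norm_eq_abs_of_apply_apply hA hc he hAe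
  obtain ⟨m, hm⟩ := Module.End.exists_norm_eq_abs_of_apply_apply hB hc he hBe
  exact ne_of_interlace h1 h2 n m (hn.symm.trans hm)

theorem IsCompactOperator.exists_apply_eq_smul_of_invariant {𝕜 E : Type*} [RCLike 𝕜]
    [NormedAddCommGroup E] [InnerProductSpace 𝕜 E] [CompleteSpace E] {T : E →L[𝕜] E}
    (hT : IsCompactOperator T) (hT' : (T : E →ₗ[𝕜] E).IsSymmetric) {V : Submodule 𝕜 E}
    [CompleteSpace V] (hV : ∀ v ∈ V, T v ∈ V) (hTV : ∃ v ∈ V, T v ≠ 0) :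
    ∃ μ : 𝕜, μ ≠ 0 ∧ ∃ v ∈ V, v ≠ 0 ∧ T v = μ • v := by
  set S : V →L[𝕜] V := T.restrict hV
  have hS : S ≠ 0 := by
    obtain ⟨v, hv, hTv⟩ := hTV
    exact fun h => hTv congr(Subtype.val ($h ⟨v, hv⟩))
  obtain ⟨μ, hμ, hμ0⟩ : ∃ μ : 𝕜, Module.End.HasEigenvalue (S : Module.End 𝕜 V) μ ∧ μ ≠ 0 := by
    by_contra! h
    exact hS ((eq_zero_of_forall_hasEigenvalue_eq_zero (hT.restrict' hV)
      (hT'.restrict_invariant hV)).1 h)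
  obtain ⟨⟨v, hv⟩, hSv, hv0⟩ := hμ.exists_hasEigenvector
  refine ⟨μ, hμ0, v, hv, by simpa using hv0, ?_⟩
  simpa [S] using congr(Subtype.val $(Module.End.mem_eigenspace_iff.1 hSv))

theorem topologicalClosure_span_pow_apply_eq_top {H : Type*} [NormedAddCommGroup H]
    [InnerProductSpace ℂ H] [CompleteSpace H] {R R₁ : H →L[ℂ] H} (hR : IsSelfAdjoint R)
    (hRc : IsCompactOperator R) (hRinj : Function.Injective R) {p : H}
    (hRR₁ : R₁ ∘L R₁ = R ∘L R - (innerSL ℂ p).smulRight p)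
    (hcommon : ∀ μ : ℂ, μ ≠ 0 → ∀ e : H, e ≠ 0 → R (R e) = μ • e → R₁ (R₁ e) ≠ μ • e) :
    (Submodule.span ℂ (Set.range fun n : ℕ => ((R ∘L R) ^ n) p)).topologicalClosure = ⊤ := by
  set K := Submodule.span ℂ (Set.range fun n : ℕ => ((R ∘L R) ^ n) p)
  have hsymm : (↑(R ∘L R) : H →ₗ[ℂ] H).IsSymmetric := fun x y =>
    (hR.isSymmetric (R x) y).trans (hR.isSymmetric x (R y))
  have hK : K ≤ K.comap (R ∘L R : H →ₗ[ℂ] H) := Submodule.span_le.2 <| by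
    rintro _ ⟨n, rfl⟩
    exact Submodule.subset_span ⟨n + 1, by
      show ((R ∘L R) ^ (n + 1)) p = (R ∘L R) (((R ∘L R) ^ n) p)
      rw [pow_succ']; rfl⟩
  have hKperp : ∀ v ∈ Kᗮ, (R ∘L R) v ∈ Kᗮ := fun v hv => (K.mem_orthogonal _).2 fun u hu =>
    (hsymm u v).symm.trans ((K.mem_orthogonal v).1 hv _ (hK hu))
  rw [Submodule.topologicalClosure_eq_top_iff]
  by_contra hbot
  obtain ⟨v, hvK, hv0⟩ := Submodule.exists_mem_ne_zero_of_ne_bot hbot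
  obtain ⟨μ, hμ, e, heK, he0, hRe⟩ := (hRc.comp_clm R).exists_apply_eq_smul_of_invariant hsymm
    hKperp ⟨v, hvK, fun h => hv0 (hRinj (hRinj (by simpa using h)))⟩
  have hpe : ⟪p, e⟫_ℂ = 0 := (K.mem_orthogonal e).1 heK p (Submodule.subset_span ⟨0, by simp⟩)
  refine hcommon μ hμ e he0 hRe ?_
  have hR₁e : R₁ (R₁ e) = R (R e) := by simpa [hpe] using congr($hRR₁ e)
  exact hR₁e.trans hRe

section ShiftLimit

variable {X Y : Type*} [TopologicalSpace X] [TopologicalSpace Y] [T2Space Y]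

def IsShiftLimit (l : Filter ℤ) (v w : ℤ → X) : Prop :=
  ∀ m, Tendsto (fun i => v (m + i)) l (𝓝 (w m))

theorem exists_isShiftLimit {K : Set X} (hK : IsCompact K) (l : Ultrafilter ℤ) {v : ℤ → X}
    (hv : ∀ m, v m ∈ K) : ∃ w, (∀ m, w m ∈ K) ∧ IsShiftLimit l v w := by
  have h m : ∃ a ∈ K, Tendsto (fun i => v (m + i)) l (𝓝 a) :=
    hK.ultrafilter_le_nhds (l.map fun i => v (m + i))
      (le_principal_iff.2 (Ultrafilter.mem_map.2 (univ_mem' fun i => hv (m + i))))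
  choose w hwK hw using h
  exact ⟨w, hwK, hw⟩

variable {l : Filter ℤ} [l.NeBot] {v w : ℤ → X}

theorem IsShiftLimit.apply_eq_of_tendsto (h : IsShiftLimit l v w) (hl : l ≤ atTop)
    {F : X → Y} (hF : Continuous F) {y : Y} (hv : Tendsto (F ∘ v) atTop (𝓝 y)) (m : ℤ) :
    F (w m) = y :=
  tendsto_nhds_unique ((hF.tendsto _).comp (h m))
    (hv.comp ((tendsto_atTop_add_const_left _ m tendsto_id).mono_left hl))

theorem IsShiftLimit.apply_eq_apply_add (h : IsShiftLimit l v w) (hl : l ≤ atTop)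
    {F G : X → Y} (hF : Continuous F) (hG : Continuous G) {s : ℤ}
    (hv : ∀ᶠ m in atTop, F (v m) = G (v (m + s))) (m : ℤ) : F (w m) = G (w (m + s)) := by
  have hG' : Tendsto (fun i => G (v (m + i + s))) l (𝓝 (G (w (m + s)))) := by
    simpa only [Function.comp_def, add_right_comm] using (hG.tendsto _).comp (h (m + s))
  refine tendsto_nhds_unique ((hF.tendsto _).comp (h m)) (hG'.congr' ?_)
  exact (((tendsto_atTop_add_const_left _ m tendsto_id).mono_left hl).eventually hv).mono
    fun i hi => hi.symm

end ShiftLimit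

theorem exists_orbit_of_tendsto_norm {E : Type*} [NormedAddCommGroup E] {g : E → E}
    (hg : Continuous g) {K : Set E} (hK : IsCompact K) {x : ℕ → E} (hxK : ∀ n, x n ∈ K)
    (hx : ∀ n, g (x n) = x (n + 1)) {c : ℝ} (hc : Tendsto (fun n => ‖x n‖) atTop (𝓝 c)) :
    ∃ y : ℤ → E, (∀ m, y m ∈ K) ∧ (∀ m, ‖y m‖ = c) ∧ ∀ m, g (y m) = y (m + 1) := by
  have hl := Ultrafilter.of_le (atTop : Filter ℤ)
  obtain ⟨y, hyK, hy⟩ := exists_isShiftLimit hK (Ultrafilter.of atTop) fun m => hxK m.toNat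
  have htoNat : Tendsto Int.toNat atTop atTop :=
    tendsto_atTop_atTop.2 fun n => ⟨n, fun m hm => by omega⟩
  refine ⟨y, hyK, hy.apply_eq_of_tendsto hl continuous_norm (hc.comp htoNat),
    hy.apply_eq_apply_add hl hg continuous_id ?_⟩
  filter_upwards [eventually_ge_atTop 0] with m hm
  rw [hx, id]
  congr
  omega

theorem ContinuousLinearMap.norm_pow_apply_le {𝕜 E : Type*} [NontriviallyNormedField 𝕜]
    [SeminormedAddCommGroup E] [NormedSpace 𝕜 E] {A : E →L[𝕜] E} (hA : ‖A‖ ≤ 1) (n : ℕ)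
    (y : E) : ‖(A ^ n) y‖ ≤ ‖y‖ := by
  induction n with
  | zero => simp
  | succ n ih =>
    rw [pow_succ', mul_apply_eq_comp]
    exact (A.le_of_opNorm_le hA _).trans (by simpa using ih)

theorem tendsto_pow_apply_of_dense {𝕜 E : Type*} [NontriviallyNormedField 𝕜]
    [SeminormedAddCommGroup E] [NormedSpace 𝕜 E] {A : E →L[𝕜] E} (hA : ‖A‖ ≤ 1) {s : Set E}
    (hs : Dense s) (h : ∀ x ∈ s, Tendsto (fun n => (A ^ n) x) atTop (𝓝 0)) (x : E) :
    Tendsto (fun n => (A ^ n) x) atTop (𝓝 0) := by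
  have hlip (n : ℕ) : LipschitzWith 1 ⇑(A ^ n) := by
    simpa using AddMonoidHomClass.lipschitz_of_bound (A ^ n) 1 fun y => by
      simpa using A.norm_pow_apply_le hA n y
  have hclosed := (LipschitzWith.uniformEquicontinuous _ 1 hlip).equicontinuous
    |>.isClosed_setOfPred_tendsto (l := atTop) (continuous_const (y := (0 : E)))
  exact (hclosed.closure_subset_iff.2 h) (hs x)

theorem ContinuousLinearMap.eq_of_comp_comp_eq {𝕜 D E F G : Type*} [Semiring 𝕜]
    [TopologicalSpace D] [AddCommMonoid D] [Module 𝕜 D] [TopologicalSpace E] [AddCommMonoid E]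
    [Module 𝕜 E] [TopologicalSpace F] [AddCommMonoid F] [Module 𝕜 F] [T2Space F]
    [TopologicalSpace G] [AddCommMonoid G] [Module 𝕜 G] {L : F →L[𝕜] G} {M : D →L[𝕜] E}
    {A B : E →L[𝕜] F} (hL : Function.Injective L) (hM : DenseRange M)
    (h : L ∘L A ∘L M = L ∘L B ∘L M) : A = B :=
  DFunLike.coe_injective <| hM.equalizer A.continuous B.continuous <|
    funext fun x => hL congr($h x)

theorem IsSelfAdjoint.denseRange {𝕜 E : Type*} [RCLike 𝕜] [NormedAddCommGroup E]
    [InnerProductSpace 𝕜 E] [CompleteSpace E] {A : E →L[𝕜] E} (hA : IsSelfAdjoint A)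
    (hinj : Function.Injective A) : DenseRange A := by
  have h : (LinearMap.range (A : E →ₗ[𝕜] E))ᗮ = ⊥ := by
    rw [orthogonal_range, hA.adjoint_eq, LinearMap.ker_eq_bot.2 hinj]
  rw [← Submodule.topologicalClosure_eq_top_iff, ← Submodule.dense_iff_topologicalClosure_eq_top,
    LinearMap.coe_range] at h
  exact h

theorem eq_zero_of_forall_inner_pow_eq_zero {E : Type*} [NormedAddCommGroup E]
    [InnerProductSpace ℂ E] [CompleteSpace E] {R : E →L[ℂ] E} (hR : IsSelfAdjoint R) {q : E}
    (hq : (Submodule.span ℂ (Set.range fun n : ℕ => ((R ∘L R) ^ n) (R q))).topologicalClosure = ⊤)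
    {v : E} (hv : ∀ k : ℕ, ⟪q, (R ^ k) v⟫_ℂ = 0) : v = 0 := by
  have hle : Submodule.span ℂ (Set.range fun n : ℕ => ((R ∘L R) ^ n) (R q)) ≤ (ℂ ∙ v)ᗮ :=
    Submodule.span_le.2 <| by
      rintro _ ⟨n, rfl⟩
      refine Submodule.mem_orthogonal_singleton_iff_inner_left.2 ?_
      dsimp only
      rw [← mul_def, ← sq, ← pow_mul, ← mul_apply_eq_comp, ← pow_succ]
      exact ((hR.pow _).isSymmetric q v).trans (hv _)
  have hvK := (Submodule.isOrtho_iff_le.2 hle).ge (Submodule.mem_span_singleton_self v)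
  rwa [Submodule.topologicalClosure_eq_top_iff.1 hq, Submodule.mem_bot] at hvK

section Stability

variable {E : Type*} [NormedAddCommGroup E] [InnerProductSpace ℂ E] [CompleteSpace E]
  {T R : E →L[ℂ] E} {q : E}

theorem norm_apply_sq_of_adjoint_mul_self_eq
    (hTT : adjoint T * T = 1 - (innerSL ℂ q).smulRight q) (y : E) :
    ‖T y‖ ^ 2 = ‖y‖ ^ 2 - ‖⟪q, y⟫_ℂ‖ ^ 2 := by
  rw [apply_norm_sq_eq_inner_adjoint_left, ← mul_def, hTT]
  simp only [sub_apply, smulRight_apply, innerSL_apply_apply, inner_sub_left, inner_smul_left,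
    RCLike.conj_mul, map_sub]
  rw [show (1 : E →L[ℂ] E) y = y from rfl, inner_self_eq_norm_sq, ← RCLike.ofReal_pow,
    RCLike.ofReal_re]

theorem opNorm_le_one_of_adjoint_mul_self_eq
    (hTT : adjoint T * T = 1 - (innerSL ℂ q).smulRight q) : ‖T‖ ≤ 1 :=
  opNorm_le_bound _ zero_le_one fun y => by
    rw [one_mul, ← sq_le_sq₀ (norm_nonneg _) (norm_nonneg _),
      norm_apply_sq_of_adjoint_mul_self_eq hTT]
    linarith [sq_nonneg ‖⟪q, y⟫_ℂ‖]

theorem adjoint_apply_apply_of_inner_eq_zero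
    (hTT : adjoint T * T = 1 - (innerSL ℂ q).smulRight q) {y : E} (hy : ⟪q, y⟫_ℂ = 0) :
    adjoint T (T y) = y := by
  simpa [hy] using congr($hTT y)

theorem tendsto_inner_of_orbit (hTT : adjoint T * T = 1 - (innerSL ℂ q).smulRight q)
    {f : ℤ → E} {C : ℝ} (hC : ∀ m, ‖f m‖ ≤ C) {s : ℤ} (hs : s = 1 ∨ s = -1)
    (hf : ∀ m, T (f m) = f (m + s)) : Tendsto (fun m => ⟪q, f m⟫_ℂ) atTop (𝓝 0) := by
  set a : ℤ → ℝ := fun m => ‖f m‖ ^ 2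
  have hstep m : ‖⟪q, f m⟫_ℂ‖ ^ 2 = a m - a (m + s) := by
    simp only [a, ← hf, norm_apply_sq_of_adjoint_mul_self_eq hTT]
    ring
  obtain ⟨L, hL⟩ : ∃ L, Tendsto a atTop (𝓝 L) := by
    rcases hs with rfl | rfl
    · refine ⟨_, tendsto_atTop_ciInf (antitone_int_of_succ_le fun m => ?_) ⟨0, ?_⟩⟩
      · linarith [hstep m, sq_nonneg ‖⟪q, f m⟫_ℂ‖]
      · rintro _ ⟨m, rfl⟩
        positivity
    · refine ⟨_, tendsto_atTop_ciSup (monotone_int_of_le_succ fun m => ?_) ⟨C ^ 2, ?_⟩⟩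
      · have h := hstep (m + 1)
        rw [add_neg_cancel_right] at h
        linarith [sq_nonneg ‖⟪q, f (m + 1)⟫_ℂ‖]
      · rintro _ ⟨m, rfl⟩
        exact pow_le_pow_left₀ (norm_nonneg _) (hC m) 2
  have hsq : Tendsto (fun m => ‖⟪q, f m⟫_ℂ‖ ^ 2) atTop (𝓝 0) := by
    simpa [hstep] using hL.sub (hL.comp (tendsto_atTop_add_const_right _ s tendsto_id))
  rw [tendsto_zero_iff_norm_tendsto_zero]
  simpa using hsq.sqrt

theorem apply_apply_sub_of_orbit (hTT : adjoint T * T = 1 - (innerSL ℂ q).smulRight q)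
    (hTR : T * R = R * adjoint T) {f : ℤ → E} {s : ℤ} (hf : ∀ m, T (f m) = f (m + s))
    (hq : ∀ m, ⟪q, f m⟫_ℂ = 0) (m : ℤ) : T (R (f m)) = R (f (m - s)) := by
  have hm : f m = T (f (m - s)) := by rw [hf, sub_add_cancel]
  calc T (R (f m)) = R (adjoint T (f m)) := congr($hTR (f m))
    _ = R (f (m - s)) := by rw [hm, adjoint_apply_apply_of_inner_eq_zero hTT (hq _)]

/-- The direction `(-1) ^ k` alternates because `T R = R T*` and `T*` inverts `T` on orbits
orthogonal to `q`. -/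
def IsOrbitTower (T R : E →L[ℂ] E) (q : E) (j : ℕ) (v : ℤ → E) : Prop :=
  ∀ k ≤ j, ∀ m, T ((R ^ k) (v m)) = (R ^ k) (v (m + (-1) ^ k)) ∧ ⟪q, (R ^ k) (v m)⟫_ℂ = 0

theorem IsOrbitTower.apply_pow_succ (hTT : adjoint T * T = 1 - (innerSL ℂ q).smulRight q)
    (hTR : T * R = R * adjoint T) {j : ℕ} {v : ℤ → E} (h : IsOrbitTower T R q j v) (m : ℤ) :
    T ((R ^ (j + 1)) (v m)) = (R ^ (j + 1)) (v (m + (-1) ^ (j + 1))) := by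
  have := apply_apply_sub_of_orbit hTT hTR (f := fun m => (R ^ j) (v m))
    (fun m => (h j le_rfl m).1) (fun m => (h j le_rfl m).2) m
  rw [pow_succ' R, mul_apply_eq_comp, mul_apply_eq_comp, this, pow_succ (-1 : ℤ), mul_neg_one,
    sub_eq_add_neg]

theorem exists_isOrbitTower_of_forall_le
    (hTT : adjoint T * T = 1 - (innerSL ℂ q).smulRight q) {K : Set E} (hK : IsCompact K)
    {v : ℤ → E} (hvK : ∀ m, v m ∈ K) {c : ℝ} (hvc : ∀ m, ‖v m‖ = c) {j : ℕ}
    (hv : ∀ k ≤ j, ∀ m, T ((R ^ k) (v m)) = (R ^ k) (v (m + (-1) ^ k))) :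
    ∃ w : ℤ → E, (∀ m, w m ∈ K) ∧ (∀ m, ‖w m‖ = c) ∧ IsOrbitTower T R q j w := by
  have hl := Ultrafilter.of_le (atTop : Filter ℤ)
  obtain ⟨w, hwK, hw⟩ := exists_isShiftLimit hK (Ultrafilter.of atTop) hvK
  obtain ⟨C, hC⟩ := hK.isBounded.exists_norm_le
  refine ⟨w, hwK, hw.apply_eq_of_tendsto hl continuous_norm (by simp [Function.comp_def, hvc]),
    fun k hk m => ⟨?_, ?_⟩⟩
  · exact hw.apply_eq_apply_add hl (T.continuous.comp (R ^ k).continuous) (R ^ k).continuous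
      (Eventually.of_forall (hv k hk)) m
  · refine hw.apply_eq_of_tendsto hl (continuous_const.inner (R ^ k).continuous) ?_ m
    exact tendsto_inner_of_orbit hTT (fun m => (R ^ k).le_opNorm_of_le (hC _ (hvK m)))
      (neg_one_pow_eq_or ℤ k) (hv k hk)

theorem exists_isOrbitTower (hTT : adjoint T * T = 1 - (innerSL ℂ q).smulRight q)
    (hTR : T * R = R * adjoint T) {K : Set E} (hK : IsCompact K) {v : ℤ → E} (hvK : ∀ m, v m ∈ K)
    {c : ℝ} (hvc : ∀ m, ‖v m‖ = c) (hv : ∀ m, T (v m) = v (m + 1)) (j : ℕ) :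
    ∃ w : ℤ → E, (∀ m, w m ∈ K) ∧ (∀ m, ‖w m‖ = c) ∧ IsOrbitTower T R q j w := by
  induction j with
  | zero =>
    refine exists_isOrbitTower_of_forall_le hTT hK hvK hvc fun k hk m => ?_
    obtain rfl := Nat.le_zero.1 hk
    simpa using hv m
  | succ j ih =>
    obtain ⟨w, hwK, hwc, hw⟩ := ih
    refine exists_isOrbitTower_of_forall_le hTT hK hwK hwc fun k hk m => ?_
    rcases Nat.lt_or_eq_of_le hk with hk | rfl
    · exact (hw k (Nat.lt_succ_iff.1 hk) m).1
    · exact hw.apply_pow_succ hTT hTR m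

theorem exists_norm_eq_forall_inner_pow_eq_zero
    (hTT : adjoint T * T = 1 - (innerSL ℂ q).smulRight q) (hTR : T * R = R * adjoint T)
    {K : Set E} (hK : IsCompact K) {v : ℤ → E} (hvK : ∀ m, v m ∈ K) {c : ℝ}
    (hvc : ∀ m, ‖v m‖ = c) (hv : ∀ m, T (v m) = v (m + 1)) :
    ∃ w : E, ‖w‖ = c ∧ ∀ k : ℕ, ⟪q, (R ^ k) w⟫_ℂ = 0 := by
  choose u huK huc hu using exists_isOrbitTower hTT hTR hK hvK hvc hv
  obtain ⟨w, -, φ, hφ, hlim⟩ := hK.tendsto_subseq fun j => huK j 0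
  refine ⟨w, tendsto_nhds_unique ((continuous_norm.tendsto w).comp hlim) ?_, fun k => ?_⟩
  · simp [Function.comp_def, huc]
  · refine tendsto_nhds_unique
      (tendsto_const_nhds.inner (((R ^ k).continuous.tendsto w).comp hlim))
      (tendsto_const_nhds.congr' ?_)
    filter_upwards [hφ.tendsto_atTop.eventually_ge_atTop k] with j hj
    exact (hu (φ j) k hj 0).2.symm

theorem tendsto_pow_apply_apply_of_isCompactOperator
    (hTT : adjoint T * T = 1 - (innerSL ℂ q).smulRight q) (hTR : T * R = R * adjoint T)
    (hR : IsCompactOperator R) (hq : ∀ v, (∀ k : ℕ, ⟪q, (R ^ k) v⟫_ℂ = 0) → v = 0) (u : E) :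
    Tendsto (fun n => (T ^ n) (R u)) atTop (𝓝 0) := by
  have hT := opNorm_le_one_of_adjoint_mul_self_eq hTT
  have hTu n : (T ^ n) (R u) = R ((adjoint T ^ n) u) :=
    congr($(((show SemiconjBy R (adjoint T) T from hTR.symm).pow_right n).eq.symm) u)
  obtain ⟨K, hK, hRK⟩ := hR.image_closedBall_subset_compact ‖u‖
  have hxK n : (T ^ n) (R u) ∈ K := hRK ⟨_, mem_closedBall_zero_iff.2
    ((adjoint T).norm_pow_apply_le (by rwa [LinearIsometryEquiv.norm_map]) n u), (hTu n).symm⟩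
  have hanti : Antitone fun n => ‖(T ^ n) (R u)‖ := antitone_nat_of_succ_le fun n => by
    rw [pow_succ', mul_apply_eq_comp]
    exact T.le_of_opNorm_le hT _ |>.trans (one_mul _).le
  have hc := tendsto_atTop_ciInf hanti ⟨0, by rintro _ ⟨n, rfl⟩; positivity⟩
  obtain ⟨y, hyK, hyc, hy⟩ := exists_orbit_of_tendsto_norm T.continuous hK hxK
    (fun n => by rw [pow_succ', mul_apply_eq_comp]) hc
  obtain ⟨w, hwc, hw⟩ := exists_norm_eq_forall_inner_pow_eq_zero hTT hTR hK hyK hyc hy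
  rw [tendsto_zero_iff_norm_tendsto_zero]
  rwa [← hwc, hq w hw, norm_zero] at hc

theorem tendsto_pow_apply_of_adjoint_mul_self_eq
    (hTT : adjoint T * T = 1 - (innerSL ℂ q).smulRight q) (hTR : T * R = R * adjoint T)
    (hR : IsCompactOperator R) (hRd : DenseRange R)
    (hq : ∀ v, (∀ k : ℕ, ⟪q, (R ^ k) v⟫_ℂ = 0) → v = 0) (x : E) :
    Tendsto (fun n => (T ^ n) x) atTop (𝓝 0) :=
  tendsto_pow_apply_of_dense (opNorm_le_one_of_adjoint_mul_self_eq hTT) hRd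
    (Set.forall_mem_range.2 (tendsto_pow_apply_apply_of_isCompactOperator hTT hTR hR hq)) x

end Stability

section Factorization

variable {H : Type*} [NormedAddCommGroup H] [InnerProductSpace ℂ H] [CompleteSpace H]
  {R R₁ S : H →L[ℂ] H}

theorem mul_eq_mul_adjoint_of_eq_comp (hR : IsSelfAdjoint R) (hR₁ : IsSelfAdjoint R₁)
    (hS : R₁ = S ∘L R) : S * R = R * adjoint S := calc
  S * R = adjoint R₁ := by rw [hR₁.adjoint_eq, hS]; rfl
  _ = R * adjoint S := by rw [hS, adjoint_comp, hR.adjoint_eq]; rfl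

theorem adjoint_mul_self_eq_of_eq_comp (hR : IsSelfAdjoint R) (hRinj : Function.Injective R)
    (hR₁ : IsSelfAdjoint R₁) (hS : R₁ = S ∘L R) {q : H}
    (hRR₁ : R₁ ∘L R₁ = R ∘L R - (innerSL ℂ (R q)).smulRight (R q)) :
    adjoint S * S = 1 - (innerSL ℂ q).smulRight q := by
  refine eq_of_comp_comp_eq hRinj (hR.denseRange hRinj) ?_
  calc R ∘L (adjoint S * S) ∘L R = R₁ ∘L R₁ := by
        simp only [hS, ← mul_def]
        rw [show R * (adjoint S * S * R) = R * adjoint S * (S * R) by simp only [mul_assoc],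
          ← mul_eq_mul_adjoint_of_eq_comp hR hR₁ hS]
    _ = R ∘L (1 - (innerSL ℂ q).smulRight q) ∘L R := by
        ext y
        simp only [hRR₁]
        simpa using congrArg (· • R q) (hR.isSymmetric q y)

end Factorization

theorem statement_4_general
    {H : Type*} [NormedAddCommGroup H] [InnerProductSpace ℂ H] [CompleteSpace H]
    (R R₁ : H →L[ℂ] H)
    (hR_sa : IsSelfAdjoint R) (hR1_sa : IsSelfAdjoint R₁)
    (hR_cpt : IsCompactOperator R)
    (hR_ker : LinearMap.ker (R : H →ₗ[ℂ] H) = ⊥)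
    (q : H) (p : H) (hp : p = R q)
    (hRR1 : R₁ ∘L R₁ = R ∘L R - (innerSL ℂ p).smulRight p)
    (lam mu : ℕ → ℝ)
    (h1 : ∀ n, |mu n| < |lam n|)
    (h2 : ∀ n, |lam (n + 1)| < |mu n|)
    (hR_eig : ∀ z : ℂ, z ≠ 0 →
      (Module.End.HasEigenvalue (R : H →ₗ[ℂ] H) z ↔ ∃ n : ℕ, z = (lam n : ℂ)))
    (hR1_eig : ∀ z : ℂ, z ≠ 0 →
      (Module.End.HasEigenvalue (R₁ : H →ₗ[ℂ] H) z ↔ ∃ n : ℕ, z = (mu n : ℂ))) :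
    (Submodule.span ℂ (Set.range fun n : ℕ => (((R ∘L R) ^ n) p))).topologicalClosure = ⊤ ∧
    (∀ Sstar : H →L[ℂ] H, ‖Sstar‖ ≤ 1 → R₁ = Sstar ∘L R →
      ∀ x : H, Tendsto (fun n : ℕ => ‖(Sstar ^ n) x‖) atTop (nhds 0)) := by
  subst hp
  have hRinj : Function.Injective R := LinearMap.ker_eq_bot.1 hR_ker
  have hcyc := topologicalClosure_span_pow_apply_eq_top hR_sa hR_cpt hRinj hRR1
    fun μ hμ e he => apply_apply_ne_of_interlace h1 h2 (fun z hz => (hR_eig z hz).1)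
      (fun z hz => (hR1_eig z hz).1) hμ he
  refine ⟨hcyc, fun S _ hS x => tendsto_zero_iff_norm_tendsto_zero.1 ?_⟩
  exact tendsto_pow_apply_of_adjoint_mul_self_eq
    (adjoint_mul_self_eq_of_eq_comp hR_sa hRinj hR1_sa hS hRR1)
    (mul_eq_mul_adjoint_of_eq_comp hR_sa hR1_sa hS) hR_cpt (hR_sa.denseRange hRinj)
    (fun v hv => eq_zero_of_forall_inner_pow_eq_zero hR_sa hcyc hv) x

/-- Let `H` be a separable complex Hilbert space, `R`, `R₁` compact
self-adjoint operators with `ker R = {0}`, `q ∈ H` with `‖q‖ ≤ 1`, `p = Rq`, and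
`R₁² = R² − pp*`. Suppose the non-zero eigenvalues `(λₖ)` of `R` and `(μₖ)` of `R₁` are all
simple and satisfy `|λ₁| > |μ₁| > |λ₂| > |μ₂| > … > 0`. Then `p` is cyclic for `R²`
(the closed span of `{(R²)ⁿ p}` is `H`) and every contraction `Σ*` with `R₁ = Σ*R`
is asymptotically stable. -/
theorem statement_4
    {H : Type*} [NormedAddCommGroup H] [InnerProductSpace ℂ H] [CompleteSpace H]
    [TopologicalSpace.SeparableSpace H]
    (R R₁ : H →L[ℂ] H)
    (hR_sa : IsSelfAdjoint R) (hR1_sa : IsSelfAdjoint R₁)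
    (hR_cpt : IsCompactOperator R) (hR1_cpt : IsCompactOperator R₁)
    (hR_ker : LinearMap.ker (R : H →ₗ[ℂ] H) = ⊥)
    (q : H) (hq : ‖q‖ ≤ 1) (p : H) (hp : p = R q)
    (hRR1 : R₁ ∘L R₁ = R ∘L R - (innerSL ℂ p).smulRight p)
    (lam mu : ℕ → ℝ)
    (hlam_ne : ∀ n, lam n ≠ 0)
    (hmu_ne : ∀ n, mu n ≠ 0)
    (h1 : ∀ n, |mu n| < |lam n|)
    (h2 : ∀ n, |lam (n + 1)| < |mu n|)
    (hR_eig : ∀ z : ℂ, z ≠ 0 →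
      (Module.End.HasEigenvalue (R : H →ₗ[ℂ] H) z ↔ ∃ n : ℕ, z = (lam n : ℂ)))
    (hR_simple : ∀ z : ℂ, z ≠ 0 → Module.End.HasEigenvalue (R : H →ₗ[ℂ] H) z →
      Module.finrank ℂ (Module.End.eigenspace (R : H →ₗ[ℂ] H) z) = 1)
    (hR1_eig : ∀ z : ℂ, z ≠ 0 →
      (Module.End.HasEigenvalue (R₁ : H →ₗ[ℂ] H) z ↔ ∃ n : ℕ, z = (mu n : ℂ)))
    (hR1_simple : ∀ z : ℂ, z ≠ 0 → Module.End.HasEigenvalue (R₁ : H →ₗ[ℂ] H) z →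
      Module.finrank ℂ (Module.End.eigenspace (R₁ : H →ₗ[ℂ] H) z) = 1) :
    (Submodule.span ℂ (Set.range fun n : ℕ => (((R ∘L R) ^ n) p))).topologicalClosure = ⊤ ∧
    (∀ Sstar : H →L[ℂ] H, ‖Sstar‖ ≤ 1 → R₁ = Sstar ∘L R →
      ∀ x : H, Tendsto (fun n : ℕ => ‖(Sstar ^ n) x‖) atTop (nhds 0)) :=
  statement_4_general R R₁ hR_sa hR1_sa hR_cpt hR_ker q p hp hRR1 lam mu h1 h2 hR_eig hR1_eig
end

section
/- Let T be a contraction (‖T‖ ≤ 1) on a Hilbert space H, let K be a compact operator on H with dense range, and let A be a bounded operator on H satisfying TK = KA. If Aⁿ → 0 in the weak operator topology as n → ∞, then Tⁿ → 0 in the strong operator topology, i.e. ‖Tⁿx‖ → 0 for every x ∈ H. -/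
/-!
Weak convergence `Aⁿ → 0` makes every orbit `(Aⁿ u)` weakly null, and a compact operator maps
weakly null sequences to norm-null ones, so `Tⁿ (K u) = K (Aⁿ u) → 0`. Thus `Tⁿ → 0` strongly on
the dense range of `K`, and since the powers of the contraction `T` are uniformly bounded, the set
where `Tⁿ x → 0` is closed, hence everything.
-/

open Filter Topology

section WeaklyNull

variable {𝕜 E F : Type*} [RCLike 𝕜] [NormedAddCommGroup E] [InnerProductSpace 𝕜 E]
  [NormedAddCommGroup F] [InnerProductSpace 𝕜 F]

local notation "⟪" x ", " y "⟫" => inner 𝕜 x y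

theorem exists_norm_le_of_tendsto_inner [CompleteSpace E] {u : ℕ → E} {x : E}
    (hu : ∀ y, Tendsto (fun n ↦ ⟪u n, y⟫) atTop (𝓝 ⟪x, y⟫)) : ∃ C, ∀ n, ‖u n‖ ≤ C := by
  have hpointwise : ∀ y, ∃ C, ∀ n, ‖innerSL 𝕜 (u n) y‖ ≤ C := fun y ↦ by
    obtain ⟨C, hC⟩ := (hu y).norm.bddAbove_range
    exact ⟨C, fun n ↦ hC ⟨n, rfl⟩⟩
  obtain ⟨C, hC⟩ := banach_steinhaus hpointwise
  exact ⟨C, fun n ↦ innerSL_apply_norm 𝕜 (u n) ▸ hC n⟩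

theorem eq_zero_of_mapClusterPt_of_tendsto_inner {ι : Type*} {l : Filter ι} {v : ι → F} {z : F}
    (hz : MapClusterPt z l v) (hv : ∀ y, Tendsto (fun i ↦ ⟪v i, y⟫) l (𝓝 0)) : z = 0 := by
  have hcluster : MapClusterPt ⟪z, z⟫ l (fun i ↦ ⟪v i, z⟫) :=
    hz.continuousAt_comp (continuous_id.inner continuous_const).continuousAt
  have hzero : ⟪z, z⟫ = (0 : 𝕜) := by
    by_contra hne
    have hne_bot : (𝓝 ⟪z, z⟫ ⊓ 𝓝 0).NeBot :=
      Filter.NeBot.mono hcluster (inf_le_inf_left _ (hv z))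
    exact hne_bot.ne (disjoint_nhds_nhds.2 hne).eq_bot
  exact inner_self_eq_zero.mp hzero

theorem IsCompactOperator.tendsto_zero_of_tendsto_inner [CompleteSpace E] [CompleteSpace F]
    {K : E →L[𝕜] F} (hK : IsCompactOperator K) {u : ℕ → E}
    (hu : ∀ y, Tendsto (fun n ↦ ⟪u n, y⟫) atTop (𝓝 0)) :
    Tendsto (fun n ↦ K (u n)) atTop (𝓝 0) := by
  obtain ⟨C, hC⟩ := exists_norm_le_of_tendsto_inner (u := u) (x := 0) (by simpa only [inner_zero_left] using hu)
  have hbdd : Bornology.IsBounded (Set.range u) :=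
    isBounded_iff_forall_norm_le.2 ⟨C, Set.forall_mem_range.2 hC⟩
  have hKu : ∀ y, Tendsto (fun n ↦ ⟪K (u n), y⟫) atTop (𝓝 0) := fun y ↦ by
    simpa [ContinuousLinearMap.adjoint_inner_right] using hu (K.adjoint y)
  refine (hK.isCompact_closure_image_of_bounded hbdd).tendsto_nhds_of_unique_mapClusterPt
    (Eventually.of_forall fun n ↦ subset_closure ⟨u n, ⟨n, rfl⟩, rfl⟩)
    fun z _ hz ↦ eq_zero_of_mapClusterPt_of_tendsto_inner hz hKu

end WeaklyNull

theorem ContinuousLinearMap.tendsto_apply_zero_of_dense {𝕜 E F ι : Type*}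
    [NontriviallyNormedField 𝕜] [SeminormedAddCommGroup E] [SeminormedAddCommGroup F]
    [NormedSpace 𝕜 E] [NormedSpace 𝕜 F] {l : Filter ι} {f : ι → E →L[𝕜] F} {C : ℝ}
    (hf : ∀ i, ‖f i‖ ≤ C) {s : Set E} (hs : Dense s)
    (h : ∀ x ∈ s, Tendsto (fun i ↦ f i x) l (𝓝 0)) (x : E) :
    Tendsto (fun i ↦ f i x) l (𝓝 0) := by
  have hequi : Equicontinuous ((↑) ∘ f : ι → E → F) :=
    ((NormedSpace.equicontinuous_TFAE f).out 5 1).1 (by exact ⟨C, hf⟩)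
  have hclosed : IsClosed {x | Tendsto (fun i ↦ f i x) l (𝓝 0)} :=
    hequi.isClosed_setOfPred_tendsto continuous_const
  exact hclosed.closure_subset_iff.2 h (hs x)

theorem ContinuousLinearMap.norm_pow_le_one {𝕜 E : Type*} [NontriviallyNormedField 𝕜]
    [SeminormedAddCommGroup E] [NormedSpace 𝕜 E] {T : E →L[𝕜] E} (hT : ‖T‖ ≤ 1) (n : ℕ) :
    ‖T ^ n‖ ≤ 1 := by
  induction n with
  | zero => exact ContinuousLinearMap.norm_id_le
  | succ n ih => exact (norm_mul_le _ _).trans (mul_le_one₀ ih (norm_nonneg _) hT)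

/-- Let `T` be a contraction on a Hilbert space `H`, `K` a compact operator
on `H` with dense range, and `A` a bounded operator with `TK = KA`. If `Aⁿ → 0` in the weak
operator topology, then `Tⁿ → 0` in the strong operator topology. -/
theorem statement_5
    {H : Type*} [NormedAddCommGroup H] [InnerProductSpace ℂ H] [CompleteSpace H]
    (T K A : H →L[ℂ] H)
    (hT : ‖T‖ ≤ 1)
    (hK_cpt : IsCompactOperator K)
    (hK_dense : DenseRange K)
    (hTK : T ∘L K = K ∘L A)
    (hA : ∀ x y : H, Tendsto (fun n : ℕ => (inner ℂ ((A ^ n) x) y : ℂ)) atTop (nhds 0)) :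
    ∀ x : H, Tendsto (fun n : ℕ => ‖(T ^ n) x‖) atTop (nhds 0) := by
  have hsemi : SemiconjBy K A T := hTK.symm
  have horbit : ∀ u, Tendsto (fun n ↦ (T ^ n) (K u)) atTop (𝓝 0) := fun u ↦
    (hK_cpt.tendsto_zero_of_tendsto_inner (hA u)).congr
      fun n ↦ DFunLike.congr_fun (hsemi.pow_right n).eq u
  intro x
  rw [← tendsto_zero_iff_norm_tendsto_zero]
  exact ContinuousLinearMap.tendsto_apply_zero_of_dense (T.norm_pow_le_one hT) hK_dense
    (Set.forall_mem_range.2 horbit) x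
end

section
/- Let A be a strict contraction on a complex Hilbert space H, meaning ‖Ax‖ < ‖x‖ for every x ≠ 0. Then Aⁿ → 0 in the weak operator topology as n → ∞, i.e. (Aⁿx, y) → 0 for all x, y ∈ H. -/
/-!
The norms `‖Aⁿx‖` decrease to some `c`. By Banach–Alaoglu, along any ultrafilter on `ℕ` finer
than `atTop` the orbit `Aⁿx` has a weak limit `z`, and then `Aⁿ⁺¹x` has weak limit `Az`.
Expanding the squares gives `‖Aⁿx - z‖² → c² - ‖z‖²` and `‖Aⁿ⁺¹x - Az‖² → c² - ‖Az‖²`; since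
`Aⁿ⁺¹x - Az = A(Aⁿx - z)` and `A` is a contraction, `‖z‖ ≤ ‖Az‖`, which strict contractivity
allows only for `z = 0`.
-/

open Filter Topology

section

variable {𝕜 E : Type*} [RCLike 𝕜] [NormedAddCommGroup E] [InnerProductSpace 𝕜 E]

theorem exists_tendsto_inner_of_norm_le [CompleteSpace E] {ι : Type*} (U : Ultrafilter ι)
    {u : ι → E} {R : ℝ} (hu : ∀ i, ‖u i‖ ≤ R) :
    ∃ z : E, ∀ w, Tendsto (fun i => inner 𝕜 (u i) w) U (𝓝 (inner 𝕜 z w)) := by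
  set v : ι → WeakDual 𝕜 E := fun i => StrongDual.toWeakDual (innerSL 𝕜 (u i))
  have hv : ∀ i, v i ∈ WeakDual.toStrongDual ⁻¹' Metric.closedBall 0 R := fun i => by
    simpa [v] using hu i
  obtain ⟨f, -, hf⟩ := (WeakDual.isCompact_closedBall 0 R).ultrafilter_le_nhds (U.map v)
    (by rw [Ultrafilter.coe_map, le_principal_iff]; exact mem_map.2 (univ_mem' hv))
  refine ⟨(InnerProductSpace.toDual 𝕜 E).symm (WeakDual.toStrongDual f), fun w => ?_⟩
  rw [InnerProductSpace.toDual_symm_apply]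
  exact ((WeakDual.eval_continuous w).tendsto f).comp hf

theorem tendsto_norm_sub_sq_of_tendsto_inner {ι : Type*} {l : Filter ι} {u : ι → E} {z : E}
    {c : ℝ} (hz : Tendsto (fun i => inner 𝕜 (u i) z) l (𝓝 (inner 𝕜 z z)))
    (hc : Tendsto (fun i => ‖u i‖) l (𝓝 c)) :
    Tendsto (fun i => ‖u i - z‖ ^ 2) l (𝓝 (c ^ 2 - ‖z‖ ^ 2)) := by
  have hre : Tendsto (fun i => RCLike.re (inner 𝕜 (u i) z)) l (𝓝 (‖z‖ ^ 2)) := by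
    have := (RCLike.continuous_re.tendsto _).comp hz
    rwa [inner_self_eq_norm_sq] at this
  simp only [@norm_sub_sq 𝕜]
  convert ((hc.pow 2).sub (hre.const_mul 2)).add_const (‖z‖ ^ 2) using 2
  ring

theorem antitone_norm_pow_apply {A : E →L[𝕜] E} (hA : ‖A‖ ≤ 1) (x : E) :
    Antitone fun n : ℕ => ‖(A ^ n) x‖ :=
  antitone_nat_of_succ_le fun n => by
    rw [pow_succ', mul_apply_eq_comp]
    exact A.le_of_opNorm_le hA _ |>.trans_eq (one_mul _)

theorem norm_le_norm_apply_of_tendsto_inner_pow_apply [CompleteSpace E] {A : E →L[𝕜] E}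
    (hA : ‖A‖ ≤ 1) {x z : E} {l : Filter ℕ} [l.NeBot] (hl : l ≤ atTop)
    (hz : ∀ w, Tendsto (fun n => inner 𝕜 ((A ^ n) x) w) l (𝓝 (inner 𝕜 z w))) :
    ‖z‖ ≤ ‖A z‖ := by
  have hc := tendsto_atTop_ciInf (antitone_norm_pow_apply hA x)
    ⟨0, by rintro _ ⟨n, rfl⟩; positivity⟩
  set c := ⨅ n : ℕ, ‖(A ^ n) x‖
  have hAz : ∀ w, Tendsto (fun n => inner 𝕜 (A ((A ^ n) x)) w) l (𝓝 (inner 𝕜 (A z) w)) := by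
    intro w
    simpa only [← ContinuousLinearMap.adjoint_inner_right] using hz (A.adjoint w)
  have hnorm : Tendsto (fun n => ‖A ((A ^ n) x)‖) l (𝓝 c) := by
    simp only [← mul_apply_eq_comp, ← pow_succ']
    exact (hc.comp (tendsto_add_atTop_nat 1)).mono_left hl
  have hle : c ^ 2 - ‖A z‖ ^ 2 ≤ c ^ 2 - ‖z‖ ^ 2 :=
    le_of_tendsto_of_tendsto' (tendsto_norm_sub_sq_of_tendsto_inner (hAz _) hnorm)
      (tendsto_norm_sub_sq_of_tendsto_inner (hz _) (hc.mono_left hl)) fun n => by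
        rw [← map_sub]
        gcongr
        exact A.le_of_opNorm_le hA _ |>.trans_eq (one_mul _)
  exact (pow_le_pow_iff_left₀ (norm_nonneg _) (norm_nonneg _) two_ne_zero).mp (by linarith)

end

/-- Let `A` be a strict contraction on a complex Hilbert space `H`, i.e.
`‖Ax‖ < ‖x‖` for every `x ≠ 0`. Then `Aⁿ → 0` in the weak operator topology:
`(Aⁿx, y) → 0` for all `x, y ∈ H`. -/
theorem statement_7
    {H : Type*} [NormedAddCommGroup H] [InnerProductSpace ℂ H] [CompleteSpace H]
    (A : H →L[ℂ] H)
    (hA : ∀ x : H, x ≠ 0 → ‖A x‖ < ‖x‖) :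
    ∀ x y : H, Tendsto (fun n : ℕ => (inner ℂ ((A ^ n) x) y : ℂ)) atTop (nhds 0) := by
  have hA1 : ‖A‖ ≤ 1 := A.opNorm_le_bound zero_le_one fun w => by
    rcases eq_or_ne w 0 with rfl | hw
    · simp
    · simpa using (hA w hw).le
  intro x y
  rw [tendsto_iff_ultrafilter]
  intro U hU
  obtain ⟨z, hz⟩ := exists_tendsto_inner_of_norm_le (𝕜 := ℂ) U (u := fun n => (A ^ n) x)
    fun n => by simpa using antitone_norm_pow_apply hA1 x (Nat.zero_le n)
  obtain rfl : z = 0 := by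
    by_contra hz0
    exact (hA z hz0).not_ge (norm_le_norm_apply_of_tendsto_inner_pow_apply hA1 hU hz)
  simpa using hz y
end

section
/- Let H be a separable complex Hilbert space, R and R₁ bounded self-adjoint operators on H with ker R = {0}, q ∈ H with ‖q‖ ≤ 1, p = Rq, and assume R² − R₁² = pp*. Let Σ* be the unique contraction with R₁ = Σ*R, let Q be the unique contraction with |R₁|^{1/2} = Q|R|^{1/2}, and let A be the unique contraction with Σ*|R|^{1/2} = |R|^{1/2}A. Suppose J and J₁ are self-adjoint unitary operators commuting with |R| and |R₁| respectively such that R = J|R| and R₁ = J₁|R₁| (polar decompositions). Then A = Q*J₁QJ. -/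
/-!
Sandwich both sides between copies of `|R|^{1/2}`:
`|R|^{1/2} A |R|^{1/2} = Σ* |R| = Σ* R J = R₁ J = J₁ |R₁|^{1/2} Q |R|^{1/2} J
 = |R|^{1/2} Q* J₁ Q J |R|^{1/2}`,
using that `J`, `J₁` commute with `|R|^{1/2}`, `|R₁|^{1/2}` (continuous functions of `|R|`,
`|R₁|`). Since `ker R = 0`, the self-adjoint operator `|R|^{1/2}` is injective with dense range,
so it cancels on both sides.
-/

open ContinuousLinearMap

theorem Commute.of_mul_self_of_nonneg {A : Type*} [CStarAlgebra A] [PartialOrder A]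
    [StarOrderedRing A] {s b : A} (hs : 0 ≤ s) (h : Commute (s * s) b) : Commute s b := by
  rw [← CFC.sqrt_mul_self s hs]
  exact h.cfcₙ_nnreal _

namespace ContinuousLinearMap

theorem IsPositive.comp_commute_of_comp_self {E : Type*} [NormedAddCommGroup E]
    [InnerProductSpace ℂ E] [CompleteSpace E] {s J : E →L[ℂ] E} (hs : s.IsPositive)
    (h : J ∘L (s ∘L s) = (s ∘L s) ∘L J) : J ∘L s = s ∘L J :=
  (Commute.of_mul_self_of_nonneg ((nonneg_iff_isPositive s).2 hs) h.symm).eq.symm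

theorem eq_of_comp_left_eq_of_injective {R M N P : Type*} [Semiring R]
    [TopologicalSpace M] [AddCommMonoid M] [Module R M]
    [TopologicalSpace N] [AddCommMonoid N] [Module R N]
    [TopologicalSpace P] [AddCommMonoid P] [Module R P]
    {T : N →L[R] P} (hT : Function.Injective T) {X Y : M →L[R] N}
    (h : T ∘L X = T ∘L Y) : X = Y :=
  ext fun x ↦ hT congr($h x)

variable {𝕜 E F G : Type*} [RCLike 𝕜]
  [NormedAddCommGroup E] [InnerProductSpace 𝕜 E] [CompleteSpace E]
  [NormedAddCommGroup F] [InnerProductSpace 𝕜 F] [CompleteSpace F]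
  [NormedAddCommGroup G] [InnerProductSpace 𝕜 G] [CompleteSpace G]

theorem eq_of_comp_right_eq_of_injective_adjoint {T : E →L[𝕜] F}
    (hT : Function.Injective (adjoint T)) {X Y : F →L[𝕜] G} (h : X ∘L T = Y ∘L T) : X = Y := by
  apply adjoint.injective
  apply eq_of_comp_left_eq_of_injective hT
  simpa only [adjoint_comp] using congr(adjoint $h)

theorem IsSelfAdjoint.eq_of_sandwich_eq {s : E →L[𝕜] E} (hs : IsSelfAdjoint s)
    (hinj : Function.Injective s) {X Y : E →L[𝕜] E} (h : s ∘L X ∘L s = s ∘L Y ∘L s) :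
    X = Y := by
  refine eq_of_comp_right_eq_of_injective_adjoint (T := s) (by rwa [hs.adjoint_eq]) ?_
  exact eq_of_comp_left_eq_of_injective hinj (by simpa only [comp_assoc] using h)

end ContinuousLinearMap

theorem statement_8_general
    {H : Type*} [NormedAddCommGroup H] [InnerProductSpace ℂ H] [CompleteSpace H]
    (R R₁ : H →L[ℂ] H)
    (hR_ker : LinearMap.ker (R : H →ₗ[ℂ] H) = ⊥)
    (Sstar : H →L[ℂ] H) (hSstar : R₁ = Sstar ∘L R)
    (absR : H →L[ℂ] H)
    (habsR : absR ∘L absR = adjoint R ∘L R)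
    (sqrtAbsR : H →L[ℂ] H) (hsqrtR_pos : sqrtAbsR.IsPositive)
    (hsqrtR : sqrtAbsR ∘L sqrtAbsR = absR)
    (absR1 : H →L[ℂ] H)
    (sqrtAbsR1 : H →L[ℂ] H) (hsqrtR1_pos : sqrtAbsR1.IsPositive)
    (hsqrtR1 : sqrtAbsR1 ∘L sqrtAbsR1 = absR1)
    (Q : H →L[ℂ] H) (hQ : sqrtAbsR1 = Q ∘L sqrtAbsR)
    (A : H →L[ℂ] H) (hA : Sstar ∘L sqrtAbsR = sqrtAbsR ∘L A)
    (J : H →L[ℂ] H) (hJ_unitary : J ∘L J = ContinuousLinearMap.id ℂ H)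
    (hJ_comm : J ∘L absR = absR ∘L J) (hJ_polar : R = J ∘L absR)
    (J₁ : H →L[ℂ] H)
    (hJ1_comm : J₁ ∘L absR1 = absR1 ∘L J₁) (hJ1_polar : R₁ = J₁ ∘L absR1) :
    A = adjoint Q ∘L J₁ ∘L Q ∘L J := by
  have hJs : J ∘L sqrtAbsR = sqrtAbsR ∘L J :=
    hsqrtR_pos.comp_commute_of_comp_self (by rwa [hsqrtR])
  have hJ₁s₁ : J₁ ∘L sqrtAbsR1 = sqrtAbsR1 ∘L J₁ :=
    hsqrtR1_pos.comp_commute_of_comp_self (by rwa [hsqrtR1])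
  have hRJ : R ∘L J = absR := by
    rw [hJ_polar, comp_assoc, ← hJ_comm, ← comp_assoc, hJ_unitary, id_comp]
  have hs₁ : sqrtAbsR1 = sqrtAbsR ∘L adjoint Q := by
    simpa only [adjoint_comp, hsqrtR1_pos.isSelfAdjoint.adjoint_eq,
      hsqrtR_pos.isSelfAdjoint.adjoint_eq] using congr(adjoint $hQ)
  have hs_inj : Function.Injective sqrtAbsR := by
    have : Function.Injective (adjoint R ∘L R) :=
      (adjoint_comp_self_injective_iff R).2 (LinearMap.ker_eq_bot.1 hR_ker)
    rw [← habsR, ← hsqrtR] at this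
    exact Function.Injective.of_comp (f := sqrtAbsR ∘ sqrtAbsR ∘ sqrtAbsR) this
  refine hsqrtR_pos.isSelfAdjoint.eq_of_sandwich_eq hs_inj ?_
  calc sqrtAbsR ∘L A ∘L sqrtAbsR = Sstar ∘L R ∘L J := by
        rw [← comp_assoc, ← hA, comp_assoc, hsqrtR, hRJ]
    _ = J₁ ∘L sqrtAbsR1 ∘L Q ∘L sqrtAbsR ∘L J := by
        rw [← comp_assoc, ← hSstar, hJ1_polar, ← hsqrtR1]
        nth_rw 2 [hQ]
        simp only [comp_assoc]
    _ = sqrtAbsR ∘L (adjoint Q ∘L J₁ ∘L Q ∘L J) ∘L sqrtAbsR := by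
        rw [← hJs, ← comp_assoc, hJ₁s₁, hs₁]
        simp only [comp_assoc]

/-- Setup: `H` separable complex Hilbert space, `R`, `R₁` self-adjoint with
`ker R = {0}`, `‖q‖ ≤ 1`, `p = Rq`, `R² − R₁² = pp*`; `Σ*` the unique contraction with
`R₁ = Σ*R`; `Q` the unique contraction with `|R₁|^{1/2} = Q |R|^{1/2}`; `A` the unique
contraction with `Σ* |R|^{1/2} = |R|^{1/2} A`. Here `|R|`, `|R₁|` are the positive operators
with `|R|² = R*R`, `|R₁|² = R₁*R₁`, and `|R|^{1/2}`, `|R₁|^{1/2}` their positive square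
roots. Let `J`, `J₁` be self-adjoint unitaries commuting with `|R|`, `|R₁|` respectively,
with `R = J|R|` and `R₁ = J₁|R₁|` (polar decompositions). Then `A = Q* J₁ Q J`. -/
theorem statement_8
    {H : Type*} [NormedAddCommGroup H] [InnerProductSpace ℂ H] [CompleteSpace H]
    [TopologicalSpace.SeparableSpace H]
    (R R₁ : H →L[ℂ] H)
    (hR_sa : IsSelfAdjoint R) (hR1_sa : IsSelfAdjoint R₁)
    (hR_ker : LinearMap.ker (R : H →ₗ[ℂ] H) = ⊥)
    (q : H) (hq : ‖q‖ ≤ 1) (p : H) (hp : p = R q)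
    (hRR1 : R ∘L R - R₁ ∘L R₁ = (innerSL ℂ p).smulRight p)
    (Sstar : H →L[ℂ] H) (hSstar_contr : ‖Sstar‖ ≤ 1) (hSstar : R₁ = Sstar ∘L R)
    (absR : H →L[ℂ] H) (habsR_pos : absR.IsPositive)
    (habsR : absR ∘L absR = adjoint R ∘L R)
    (sqrtAbsR : H →L[ℂ] H) (hsqrtR_pos : sqrtAbsR.IsPositive)
    (hsqrtR : sqrtAbsR ∘L sqrtAbsR = absR)
    (absR1 : H →L[ℂ] H) (habsR1_pos : absR1.IsPositive)
    (habsR1 : absR1 ∘L absR1 = adjoint R₁ ∘L R₁)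
    (sqrtAbsR1 : H →L[ℂ] H) (hsqrtR1_pos : sqrtAbsR1.IsPositive)
    (hsqrtR1 : sqrtAbsR1 ∘L sqrtAbsR1 = absR1)
    (Q : H →L[ℂ] H) (hQ_contr : ‖Q‖ ≤ 1) (hQ : sqrtAbsR1 = Q ∘L sqrtAbsR)
    (A : H →L[ℂ] H) (hA_contr : ‖A‖ ≤ 1) (hA : Sstar ∘L sqrtAbsR = sqrtAbsR ∘L A)
    (J : H →L[ℂ] H) (hJ_sa : IsSelfAdjoint J) (hJ_unitary : J ∘L J = ContinuousLinearMap.id ℂ H)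
    (hJ_comm : J ∘L absR = absR ∘L J) (hJ_polar : R = J ∘L absR)
    (J₁ : H →L[ℂ] H) (hJ1_sa : IsSelfAdjoint J₁)
    (hJ1_unitary : J₁ ∘L J₁ = ContinuousLinearMap.id ℂ H)
    (hJ1_comm : J₁ ∘L absR1 = absR1 ∘L J₁) (hJ1_polar : R₁ = J₁ ∘L absR1) :
    A = adjoint Q ∘L J₁ ∘L Q ∘L J :=
  statement_8_general R R₁ hR_ker Sstar hSstar absR habsR sqrtAbsR hsqrtR_pos hsqrtR absR1 sqrtAbsR1
    hsqrtR1_pos hsqrtR1 Q hQ A hA J hJ_unitary hJ_comm hJ_polar J₁ hJ1_comm hJ1_polar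
end

section
/- Let H be a separable complex Hilbert space, R and R₁ bounded self-adjoint operators on H with ker R = {0}, q ∈ H with ‖q‖ ≤ 1, p = Rq, and assume R² − R₁² = pp*. Let Q be the unique contraction with |R₁|^{1/2} = Q|R|^{1/2}, let J be a self-adjoint unitary commuting with |R| such that R = J|R|, and let H₀ be the smallest closed |R|-invariant subspace of H containing Jq. Then H₀ and H₀^⊥ are invariant under Q, Q acts as the identity on H₀^⊥, and Q restricted to H₀ is a strict contraction: ‖Qh‖ < ‖h‖ for every non-zero h ∈ H₀. -/
/-!
Write `T = |R|`, `S = |R|^{1/2}`, `T₁ = |R₁|`, `S₁ = |R₁|^{1/2}` and `P` for the orthogonal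
projection onto `H₀`. Since `R` is self-adjoint, `T² − T₁² = pp*` with `p = Rq = T(Jq) ∈ H₀`.

`H₀` is `T`-invariant and contains `p`, so `P` commutes with `T` and with `T₁² = T² − pp*`, hence
with their positive square roots `T₁`, `S`, `S₁`. On `H₀ᗮ` the rank-one term vanishes, so
uniqueness of positive square roots gives `T₁ = T` and then `S₁ = S` there. Cancelling the
injective self-adjoint `S` on the right of `QS = S₁` shows that `Q` is the identity on `H₀ᗮ` and
maps `H₀` into itself.

For strictness put `C = Q*Q`, so that `T₁ = SCS`; cancelling `S` on both sides of
`T² − T₁² = pp*` gives `T − CTC = gg*` with `g = S(Jq)`. For a contraction, `‖Qx‖ = ‖x‖` forces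
`Cx = x`, and the identity shows that the fixed space of `C` is `T`-invariant and orthogonal to
`g`. So if `x ∈ H₀` and `‖Qx‖ = ‖x‖`, then `Sx ⊥ Tⁿ(Jq)` for all `n`, i.e. `Sx ∈ H₀ ∩ H₀ᗮ = 0`,
and `x = 0`.
-/

open ContinuousLinearMap InnerProductSpace Module.End

section StarRing

variable {A : Type*}

theorem IsSelfAdjoint.isRegular_of_isLeftRegular [Mul A] [StarMul A] {s : A}
    (hs : IsSelfAdjoint s) (h : IsLeftRegular s) : IsRegular s :=
  ⟨h, hs.star_eq ▸ h.star⟩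

variable [Ring A] {p q s s₁ : A}

theorem IsRightRegular.mul_eq_self_of_mul_eq (hs : IsRightRegular s) (hq : q * s = s₁)
    (hps : Commute p s) (hps₁ : Commute p s₁) (h : p * s = p * s₁) : q * p = p :=
  hs <| by
    calc q * p * s = q * s * p := by rw [mul_assoc, hps.eq, mul_assoc]
      _ = p * s := by rw [hq, ← hps₁.eq, ← h]

theorem IsRightRegular.mul_mul_one_sub_eq_zero (hs : IsRightRegular s) (hp : IsIdempotentElem p)
    (hq : q * s = s₁) (hps : Commute p s) (hps₁ : Commute p s₁) : p * q * (1 - p) = 0 :=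
  hs <| by
    calc p * q * (1 - p) * s = p * (q * s) * (1 - p) := by
          rw [mul_assoc _ (1 - p), ((Commute.one_left s).sub_left hps).eq]
          noncomm_ring
      _ = s₁ * (p * (1 - p)) := by rw [hq, hps₁.eq, mul_assoc]
      _ = 0 * s := by rw [mul_sub, mul_one, hp.eq, sub_self, mul_zero, zero_mul]

theorem IsRegular.sub_mul_mul_eq_of_mul_self_sub_mul_self_eq [StarRing A] {t t₁ g : A}
    (hs : IsRegular s) (hs_sa : IsSelfAdjoint s) (hqs : IsSelfAdjoint (q * s))
    (ht : s * s = t) (ht₁ : q * s * (q * s) = t₁) (h : t * t - t₁ * t₁ = s * g * s) :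
    t - star q * q * t * (star q * q) = g := by
  have ht₁' : t₁ = s * (star q * q) * s := by
    rw [← ht₁]
    nth_rw 1 [← hqs.star_eq]
    rw [star_mul, hs_sa.star_eq]
    noncomm_ring
  refine hs.left (hs.right ?_)
  show s * (t - star q * q * t * (star q * q)) * s = s * g * s
  rw [← h, ← ht, ht₁']
  noncomm_ring

end StarRing

section CStarAlgebra

variable {A : Type*} [CStarAlgebra A] [PartialOrder A] [StarOrderedRing A] {p b c : A}

theorem Commute.of_mul_self_right (hb : 0 ≤ b) (h : Commute p (b * b)) : Commute p b := by
  rw [← CFC.sqrt_mul_self b hb, CFC.sqrt_eq_cfc]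
  exact (h.symm.cfc_nnreal _).symm

theorem IsStarProjection.mul_eq_mul_of_mul_mul_self_eq (hp : IsStarProjection p) (hb : 0 ≤ b)
    (hc : 0 ≤ c) (hpb : Commute p b) (hpc : Commute p c) (h : p * (b * b) = p * (c * c)) :
    p * b = p * c := by
  have sqrt_eq {x : A} (hx : 0 ≤ x) (hpx : Commute p x) : CFC.sqrt (p * (x * x)) = p * x := by
    refine CFC.sqrt_unique ?_ (hpx.mul_nonneg hp.nonneg hx)
    calc p * x * (p * x) = p * (x * p) * x := by noncomm_ring
      _ = p * (x * x) := by rw [← hpx.eq, ← mul_assoc p p, hp.isIdempotentElem.eq, mul_assoc]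
  rw [← sqrt_eq hb hpb, h, sqrt_eq hc hpc]

theorem IsStarProjection.commute_and_mul_eq_of_mul_self_sub_mul_self (hp : IsStarProjection p)
    (hb : 0 ≤ b) (hc : 0 ≤ c) (hpb : Commute p b) (h : p * (b * b - c * c) = 0)
    (h' : (b * b - c * c) * p = 0) : Commute p c ∧ p * b = p * c := by
  have hpc : Commute p c := .of_mul_self_right hc <| by
    simpa using (hpb.mul_right hpb).sub_right (h.trans h'.symm : Commute p (b * b - c * c))
  refine ⟨hpc, hp.mul_eq_mul_of_mul_mul_self_eq hb hc hpb hpc ?_⟩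
  rwa [mul_sub, sub_eq_zero] at h

end CStarAlgebra

theorem ContinuousLinearMap.isLeftRegular_of_injective {R M : Type*} [Semiring R]
    [TopologicalSpace M] [AddCommMonoid M] [Module R M] {S : M →L[R] M}
    (h : Function.Injective S) : IsLeftRegular S :=
  fun _ _ hXY => ext fun x => h congr($hXY x)

section CyclicSubspace

variable {R M : Type*} [Semiring R] [TopologicalSpace R] [TopologicalSpace M] [AddCommMonoid M]
  [Module R M] [ContinuousAdd M] [ContinuousSMul R M]

def closedCyclicSubspace (T : M →L[R] M) (v : M) : Submodule R M :=
  (Submodule.span R (Set.range fun n : ℕ => (T ^ n) v)).topologicalClosure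

theorem pow_apply_mem_closedCyclicSubspace (T : M →L[R] M) (v : M) (n : ℕ) :
    (T ^ n) v ∈ closedCyclicSubspace T v :=
  Submodule.le_topologicalClosure _ (Submodule.subset_span ⟨n, rfl⟩)

theorem closedCyclicSubspace_mem_invtSubmodule (T : M →L[R] M) (v : M) :
    closedCyclicSubspace T v ∈ invtSubmodule (T : M →ₗ[R] M) := by
  refine Submodule.topologicalClosure_mem_invtSubmodule ?_
  rw [mem_invtSubmodule_iff_map_le, Submodule.map_span]
  refine Submodule.span_mono ?_
  rintro _ ⟨_, ⟨n, rfl⟩, rfl⟩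
  exact ⟨n + 1, show (T ^ (n + 1)) v = T ((T ^ n) v) by rw [pow_succ']; rfl⟩

end CyclicSubspace

section Hilbert

variable {𝕜 E : Type*} [RCLike 𝕜] [NormedAddCommGroup E] [InnerProductSpace 𝕜 E]

theorem mem_closedCyclicSubspace_orthogonal {T : E →L[𝕜] E} {v y : E}
    (h : ∀ n : ℕ, ⟪(T ^ n) v, y⟫_𝕜 = 0) : y ∈ (closedCyclicSubspace T v)ᗮ := by
  rw [closedCyclicSubspace, Submodule.orthogonal_closure, Submodule.mem_orthogonal]
  have hle : Submodule.span 𝕜 (Set.range fun n : ℕ => (T ^ n) v) ≤ (𝕜 ∙ y)ᗮ := by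
    rw [Submodule.span_le]
    rintro _ ⟨n, rfl⟩
    exact Submodule.mem_orthogonal_singleton_iff_inner_left.mpr (h n)
  exact fun u hu => Submodule.mem_orthogonal_singleton_iff_inner_left.mp (hle hu)

theorem Submodule.one_sub_starProjection_mul_rankOne {K : Submodule 𝕜 E}
    [K.HasOrthogonalProjection] {x : E} (hx : x ∈ K) (y : E) :
    (1 - K.starProjection) * rankOne 𝕜 x y = 0 := by
  rw [ContinuousLinearMap.mul_def, comp_rankOne, sub_apply, one_apply_eq_self,
    starProjection_eq_self_iff.mpr hx, sub_self, map_zero]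
  rfl

variable [CompleteSpace E]

theorem ContinuousLinearMap.adjoint_apply_apply_eq_self_of_norm_le
    {F : Type*} [NormedAddCommGroup F] [InnerProductSpace 𝕜 F] [CompleteSpace F]
    {Q : E →L[𝕜] F} (hQ : ‖Q‖ ≤ 1) {x : E} (hx : ‖x‖ ≤ ‖Q x‖) : adjoint Q (Q x) = x := by
  have hQQx : ‖adjoint Q (Q x)‖ ≤ ‖Q x‖ :=
    ((adjoint Q).le_of_opNorm_le (by rwa [LinearIsometryEquiv.norm_map]) _).trans_eq (one_mul _)
  have hre : RCLike.re ⟪adjoint Q (Q x), x⟫_𝕜 = ‖Q x‖ ^ 2 := by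
    rw [adjoint_inner_left, inner_self_eq_norm_sq]
  have hsq := norm_sub_sq (𝕜 := 𝕜) (adjoint Q (Q x)) x
  refine sub_eq_zero.mp (norm_eq_zero.mp (pow_eq_zero_iff two_ne_zero |>.mp ?_))
  nlinarith [pow_le_pow_left₀ (norm_nonneg _) hQQx 2, pow_le_pow_left₀ (norm_nonneg _) hx 2,
    sq_nonneg ‖adjoint Q (Q x) - x‖]

theorem ContinuousLinearMap.mul_rankOne_mul (A B : E →L[𝕜] E) (x y : E) :
    A * rankOne 𝕜 x y * B = rankOne 𝕜 (A x) (adjoint B y) := by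
  rw [mul_def, mul_def, comp_rankOne, rankOne_comp]

theorem Submodule.rankOne_mul_one_sub_starProjection {K : Submodule 𝕜 E}
    [K.HasOrthogonalProjection] (x : E) {y : E} (hy : y ∈ K) :
    rankOne 𝕜 x y * (1 - K.starProjection) = 0 := by
  rw [ContinuousLinearMap.mul_def, rankOne_comp,
    isStarProjection_starProjection.one_sub.isSelfAdjoint.adjoint_eq, sub_apply,
    one_apply_eq_self, starProjection_eq_self_iff.mpr hy, sub_self, map_zero]

theorem Submodule.commute_starProjection_of_mem_invtSubmodule {K : Submodule 𝕜 E}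
    [K.HasOrthogonalProjection] {T : E →L[𝕜] E} (hT : IsSelfAdjoint T)
    (hK : K ∈ invtSubmodule (T : E →ₗ[𝕜] E)) : Commute K.starProjection T := by
  refine K.isIdempotentElem_starProjection.commute_iff.mpr ⟨?_, ?_⟩
  · rwa [range_starProjection]
  · rw [ker_starProjection]
    exact ContinuousLinearMap.orthogonal_mem_invtSubmodule (hT.adjoint_eq.symm ▸ hK)

theorem IsSelfAdjoint.inner_eq_zero_and_apply_apply_eq_self {T c : E →L[𝕜] E} {g u : E}
    (hc : IsSelfAdjoint c) (h : T - c * T * c = rankOne 𝕜 g g) (hu : c u = u) :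
    ⟪g, u⟫_𝕜 = 0 ∧ c (T u) = T u := by
  have hTu : T u - c (T u) = ⟪g, u⟫_𝕜 • g := by simpa [hu] using congr($h u)
  have hg : ⟪g, u⟫_𝕜 = 0 := by
    have h0 : ⟪u, T u - c (T u)⟫_𝕜 = 0 := by
      have hsymm := hc.isSymmetric u (T u)
      simp only [ContinuousLinearMap.coe_coe, hu] at hsymm
      rw [inner_sub_right, ← hsymm, sub_self]
    rw [hTu, inner_smul_right] at h0
    exact (mul_eq_zero.mp h0).elim id inner_eq_zero_symm.mp
  refine ⟨hg, ?_⟩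
  rwa [hg, zero_smul, sub_eq_zero, eq_comm] at hTu

theorem IsSelfAdjoint.inner_pow_apply_eq_zero {T c : E →L[𝕜] E} {g u : E}
    (hc : IsSelfAdjoint c) (h : T - c * T * c = rankOne 𝕜 g g) (hu : c u = u) (n : ℕ) :
    ⟪g, (T ^ n) u⟫_𝕜 = 0 := by
  have hfix : ∀ n : ℕ, c ((T ^ n) u) = (T ^ n) u := by
    intro n
    induction n with
    | zero => simpa using hu
    | succ n ih =>
      rw [pow_succ', mul_apply_eq_comp]
      exact (hc.inner_eq_zero_and_apply_apply_eq_self h ih).2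
  exact (hc.inner_eq_zero_and_apply_apply_eq_self h (hfix n)).1

theorem sub_adjoint_mul_mul_eq_rankOne {T T₁ S S₁ Q : E →L[𝕜] E} {v : E}
    (hS : IsSelfAdjoint S) (hS_inj : Function.Injective S) (hS₁ : IsSelfAdjoint S₁)
    (hST : S * S = T) (hST₁ : S₁ * S₁ = T₁) (hQS : Q * S = S₁)
    (h : T * T - T₁ * T₁ = rankOne 𝕜 (T v) (T v)) :
    T - adjoint Q * Q * T * (adjoint Q * Q) = rankOne 𝕜 (S v) (S v) := by
  rw [← ContinuousLinearMap.star_eq_adjoint]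
  refine (hS.isRegular_of_isLeftRegular (ContinuousLinearMap.isLeftRegular_of_injective hS_inj)
    ).sub_mul_mul_eq_of_mul_self_sub_mul_self_eq hS (hQS ▸ hS₁) hST (hQS ▸ hST₁) ?_
  rw [h, ContinuousLinearMap.mul_rankOne_mul, hS.adjoint_eq, ← mul_apply_eq_comp, hST]

instance (T : E →L[𝕜] E) (v : E) : CompleteSpace (closedCyclicSubspace T v) :=
  (Submodule.isClosed_topologicalClosure _).completeSpace_coe

end Hilbert

section ComplexHilbert

variable {H : Type*} [NormedAddCommGroup H] [InnerProductSpace ℂ H] [CompleteSpace H]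

theorem Submodule.mapsTo_and_eqOn_orthogonal_of_mul_self_sub_mul_self_eq_rankOne
    {K : Submodule ℂ H} [K.HasOrthogonalProjection] {T T₁ S S₁ Q : H →L[ℂ] H} {p : H}
    (hS : 0 ≤ S) (hS₁ : 0 ≤ S₁) (hS_inj : Function.Injective S) (hST : S * S = T)
    (hST₁ : S₁ * S₁ = T₁) (hQS : Q * S = S₁) (h : T * T - T₁ * T₁ = rankOne ℂ p p)
    (hKT : K ∈ invtSubmodule (T : H →ₗ[ℂ] H)) (hp : p ∈ K) :
    Set.MapsTo Q K K ∧ Set.EqOn Q id Kᗮ := by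
  set P := K.starProjection
  have hP' : IsStarProjection (1 - P) := isStarProjection_starProjection.one_sub
  have hT : 0 ≤ T := hST ▸ hS.isSelfAdjoint.mul_self_nonneg
  have hT₁ : 0 ≤ T₁ := hST₁ ▸ hS₁.isSelfAdjoint.mul_self_nonneg
  have hPT : Commute (1 - P) T := (Commute.one_left _).sub_left
    (K.commute_starProjection_of_mem_invtSubmodule hT.isSelfAdjoint hKT)
  obtain ⟨hPT₁, hT_eq⟩ := hP'.commute_and_mul_eq_of_mul_self_sub_mul_self hT hT₁ hPT
    (h ▸ K.one_sub_starProjection_mul_rankOne hp p)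
    (h ▸ K.rankOne_mul_one_sub_starProjection p hp)
  have hPS : Commute (1 - P) S := .of_mul_self_right hS (hST ▸ hPT)
  obtain ⟨hPS₁, hS_eq⟩ := hP'.commute_and_mul_eq_of_mul_self_sub_mul_self hS hS₁ hPS
    (by rw [hST, hST₁, mul_sub, hT_eq, sub_self])
    (by rw [hST, hST₁, sub_mul, ← hPT.eq, ← hPT₁.eq, hT_eq, sub_self])
  have hS_reg : IsRightRegular S := (hS.isSelfAdjoint.isRegular_of_isLeftRegular
    (ContinuousLinearMap.isLeftRegular_of_injective hS_inj)).right
  have hQ_fix : Q * (1 - P) = 1 - P := hS_reg.mul_eq_self_of_mul_eq hQS hPS hPS₁ hS_eq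
  have hQ_inv : (1 - P) * Q * P = 0 := by
    simpa using hS_reg.mul_mul_one_sub_eq_zero hP'.isIdempotentElem hQS hPS hPS₁
  refine ⟨fun x hx => ?_, fun x hx => ?_⟩
  · have hPx : P x = x := starProjection_eq_self_iff.mpr hx
    have hQx := congr($hQ_inv x)
    simp only [mul_apply_eq_comp, hPx, sub_apply, one_apply_eq_self, zero_apply,
      sub_eq_zero] at hQx
    exact starProjection_eq_self_iff.mp hQx.symm
  · have hPx : P x = 0 := (K.starProjection_apply_eq_zero_iff).mpr hx
    simpa [hPx] using congr($hQ_fix x)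

theorem norm_apply_lt_of_mem_closedCyclicSubspace {T S Q : H →L[ℂ] H} {v x : H}
    (hS : 0 ≤ S) (hS_inj : Function.Injective S) (hST : S * S = T) (hQ : ‖Q‖ ≤ 1)
    (hkey : T - adjoint Q * Q * T * (adjoint Q * Q) = rankOne ℂ (S v) (S v))
    (hx : x ∈ closedCyclicSubspace T v) (hx0 : x ≠ 0) : ‖Q x‖ < ‖x‖ := by
  by_contra! hle
  set K := closedCyclicSubspace T v
  have hT : IsSelfAdjoint T := (hST ▸ hS.isSelfAdjoint.mul_self_nonneg).isSelfAdjoint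
  have hc : IsSelfAdjoint (adjoint Q * Q) := IsSelfAdjoint.star_mul_self Q
  have hST_comm : Commute S T := hST ▸ (Commute.refl S).mul_right (Commute.refl S)
  have hSx_orth : S x ∈ Kᗮ := by
    refine mem_closedCyclicSubspace_orthogonal fun n => ?_
    calc ⟪(T ^ n) v, S x⟫_ℂ = ⟪(T ^ n) (S v), x⟫_ℂ := by
          rw [← mul_apply_eq_comp, ← (hST_comm.pow_right n).eq, mul_apply_eq_comp]
          exact (hS.isSelfAdjoint.isSymmetric _ _).symm
      _ = ⟪S v, (T ^ n) x⟫_ℂ := (hT.pow n).isSymmetric _ _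
      _ = 0 := hc.inner_pow_apply_eq_zero hkey
          (ContinuousLinearMap.adjoint_apply_apply_eq_self_of_norm_le hQ hle) n
  have hPS : Commute K.starProjection S := .of_mul_self_right hS <| by
    rw [hST]
    exact K.commute_starProjection_of_mem_invtSubmodule hT
      (closedCyclicSubspace_mem_invtSubmodule T v)
  have hSx_mem : S x ∈ K := by
    rw [← Submodule.starProjection_eq_self_iff] at hx ⊢
    rw [← mul_apply_eq_comp, hPS.eq, mul_apply_eq_comp, hx]
  have hSx : S x = 0 :=
    inner_self_eq_zero.mp (Submodule.inner_right_of_mem_orthogonal hSx_mem hSx_orth)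
  exact hx0 (hS_inj (hSx.trans (map_zero S).symm))

end ComplexHilbert

theorem statement_9_general
    {H : Type*} [NormedAddCommGroup H] [InnerProductSpace ℂ H] [CompleteSpace H]
    (R R₁ : H →L[ℂ] H)
    (hR_sa : IsSelfAdjoint R) (hR1_sa : IsSelfAdjoint R₁)
    (hR_ker : LinearMap.ker (R : H →ₗ[ℂ] H) = ⊥)
    (q : H) (p : H) (hp : p = R q)
    (hRR1 : R ∘L R - R₁ ∘L R₁ = (innerSL ℂ p).smulRight p)
    (absR : H →L[ℂ] H)
    (habsR : absR ∘L absR = adjoint R ∘L R)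
    (sqrtAbsR : H →L[ℂ] H) (hsqrtR_pos : sqrtAbsR.IsPositive)
    (hsqrtR : sqrtAbsR ∘L sqrtAbsR = absR)
    (absR1 : H →L[ℂ] H)
    (habsR1 : absR1 ∘L absR1 = adjoint R₁ ∘L R₁)
    (sqrtAbsR1 : H →L[ℂ] H) (hsqrtR1_pos : sqrtAbsR1.IsPositive)
    (hsqrtR1 : sqrtAbsR1 ∘L sqrtAbsR1 = absR1)
    (Q : H →L[ℂ] H) (hQ_contr : ‖Q‖ ≤ 1) (hQ : sqrtAbsR1 = Q ∘L sqrtAbsR)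
    (J : H →L[ℂ] H)
    (hJ_comm : J ∘L absR = absR ∘L J) (hJ_polar : R = J ∘L absR)
    (H₀ : Submodule ℂ H)
    (hH₀ : H₀ = (Submodule.span ℂ (Set.range fun n : ℕ => (absR ^ n) (J q))).topologicalClosure) :
    (∀ x ∈ H₀, Q x ∈ H₀) ∧
    (∀ x ∈ H₀ᗮ, Q x ∈ H₀ᗮ) ∧
    (∀ x ∈ H₀ᗮ, Q x = x) ∧
    (∀ x ∈ H₀, x ≠ 0 → ‖Q x‖ < ‖x‖) := by
  change H₀ = closedCyclicSubspace absR (J q) at hH₀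
  subst hH₀ hp
  rw [← nonneg_iff_isPositive] at hsqrtR_pos hsqrtR1_pos
  have hR_inj : Function.Injective R := LinearMap.ker_eq_bot.mp hR_ker
  have hT_inj : Function.Injective absR := Function.Injective.of_comp (f := absR) <| by
    rw [← coe_comp, habsR, hR_sa.adjoint_eq, coe_comp]
    exact hR_inj.comp hR_inj
  have hS_inj : Function.Injective sqrtAbsR :=
    Function.Injective.of_comp (f := sqrtAbsR) (by rwa [← coe_comp, hsqrtR])
  have hRq : R q = absR (J q) := by rw [hJ_polar, hJ_comm]; rfl
  have hdiff : absR * absR - absR1 * absR1 = rankOne ℂ (R q) (R q) := by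
    rw [mul_def, mul_def, habsR, habsR1, hR_sa.adjoint_eq, hR1_sa.adjoint_eq]
    exact hRR1
  obtain ⟨hQ_maps, hQ_fix⟩ :=
    Submodule.mapsTo_and_eqOn_orthogonal_of_mul_self_sub_mul_self_eq_rankOne hsqrtR_pos
      hsqrtR1_pos hS_inj hsqrtR hsqrtR1 hQ.symm hdiff (closedCyclicSubspace_mem_invtSubmodule _ _)
      (hRq ▸ pow_one absR ▸ pow_apply_mem_closedCyclicSubspace absR (J q) 1)
  refine ⟨fun x hx => hQ_maps hx, fun x hx => (hQ_fix hx).symm ▸ hx, fun x hx => hQ_fix hx,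
    fun x hx hx0 => norm_apply_lt_of_mem_closedCyclicSubspace hsqrtR_pos hS_inj hsqrtR hQ_contr
      ?_ hx hx0⟩
  exact sub_adjoint_mul_mul_eq_rankOne hsqrtR_pos.isSelfAdjoint hS_inj hsqrtR1_pos.isSelfAdjoint
    hsqrtR hsqrtR1 hQ.symm (hRq ▸ hdiff)

/-- Setup: `H` separable complex Hilbert space, `R`, `R₁` self-adjoint with
`ker R = {0}`, `‖q‖ ≤ 1`, `p = Rq`, `R² − R₁² = pp*`. Let `Q` be the unique contraction
with `|R₁|^{1/2} = Q |R|^{1/2}` (with `|R|`, `|R₁|` the positive operators whose squares are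
`R*R`, `R₁*R₁`, and `|R|^{1/2}`, `|R₁|^{1/2}` their positive square roots), `J` a
self-adjoint unitary commuting with `|R|` with `R = J|R|`, and `H₀` the smallest closed
`|R|`-invariant subspace containing `Jq`, i.e. the closed span of `{|R|ⁿ (Jq) : n ≥ 0}`.
Then `H₀` and `H₀ᗮ` are `Q`-invariant, `Q = I` on `H₀ᗮ`, and `Q` is a strict contraction
on `H₀`. -/
theorem statement_9
    {H : Type*} [NormedAddCommGroup H] [InnerProductSpace ℂ H] [CompleteSpace H]
    [TopologicalSpace.SeparableSpace H]
    (R R₁ : H →L[ℂ] H)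
    (hR_sa : IsSelfAdjoint R) (hR1_sa : IsSelfAdjoint R₁)
    (hR_ker : LinearMap.ker (R : H →ₗ[ℂ] H) = ⊥)
    (q : H) (hq : ‖q‖ ≤ 1) (p : H) (hp : p = R q)
    (hRR1 : R ∘L R - R₁ ∘L R₁ = (innerSL ℂ p).smulRight p)
    (absR : H →L[ℂ] H) (habsR_pos : absR.IsPositive)
    (habsR : absR ∘L absR = adjoint R ∘L R)
    (sqrtAbsR : H →L[ℂ] H) (hsqrtR_pos : sqrtAbsR.IsPositive)
    (hsqrtR : sqrtAbsR ∘L sqrtAbsR = absR)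
    (absR1 : H →L[ℂ] H) (habsR1_pos : absR1.IsPositive)
    (habsR1 : absR1 ∘L absR1 = adjoint R₁ ∘L R₁)
    (sqrtAbsR1 : H →L[ℂ] H) (hsqrtR1_pos : sqrtAbsR1.IsPositive)
    (hsqrtR1 : sqrtAbsR1 ∘L sqrtAbsR1 = absR1)
    (Q : H →L[ℂ] H) (hQ_contr : ‖Q‖ ≤ 1) (hQ : sqrtAbsR1 = Q ∘L sqrtAbsR)
    (J : H →L[ℂ] H) (hJ_sa : IsSelfAdjoint J) (hJ_unitary : J ∘L J = ContinuousLinearMap.id ℂ H)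
    (hJ_comm : J ∘L absR = absR ∘L J) (hJ_polar : R = J ∘L absR)
    (H₀ : Submodule ℂ H)
    (hH₀ : H₀ = (Submodule.span ℂ (Set.range fun n : ℕ => (absR ^ n) (J q))).topologicalClosure) :
    (∀ x ∈ H₀, Q x ∈ H₀) ∧
    (∀ x ∈ H₀ᗮ, Q x ∈ H₀ᗮ) ∧
    (∀ x ∈ H₀ᗮ, Q x = x) ∧
    (∀ x ∈ H₀, x ≠ 0 → ‖Q x‖ < ‖x‖) :=
  statement_9_general R R₁ hR_sa hR1_sa hR_ker q p hp hRR1 absR habsR sqrtAbsR hsqrtR_pos hsqrtR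
    absR1 habsR1 sqrtAbsR1 hsqrtR1_pos hsqrtR1 Q hQ_contr hQ J hJ_comm hJ_polar H₀ hH₀
end

section
/- Let (λₖ²)ₖ≥₁ and (μₖ²)ₖ≥₁ satisfy λ₁² > μ₁² > λ₂² > μ₂² > … > 0 with λₖ² → 0, and set σ = {λₖ² : k ≥ 1} ∪ {0}. Then the infinite product Φ(z) = ∏ₖ≥₁ (z − μₖ²)/(z − λₖ²) converges uniformly on compact subsets of ℂ∖σ, and Φ(z) → 1 as z → ∞. -/
open Filter Topology

/-- The set `σ = {λₖ² : k ≥ 1} ∪ {0}`, as a subset of `ℂ`. -/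
def sigmaSet (lam : ℕ → ℝ) : Set ℂ :=
  insert (0 : ℂ) (Set.range fun k : ℕ => ((lam k : ℝ) : ℂ))

/-!
Write each factor as `1 + (λₖ - μₖ) / (z - λₖ)`. Interlacing makes `λₖ - μₖ ≤ λₖ - λₖ₊₁`, so
`∑ (λₖ - μₖ)` converges by telescoping. On a compact set at positive distance `δ` from the poles
the perturbations are bounded by `(λₖ - μₖ) / δ`, and the M-test for products gives uniform
convergence; for `|z|` large they are bounded by `λₖ - μₖ` and tend to `0`, so dominated
convergence for products gives `Φ(z) → 1`.
-/

theorem summable_sub_of_interlacing {lam mu : ℕ → ℝ} {L : ℝ} (h1 : ∀ k, mu k ≤ lam k)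
    (h2 : ∀ k, lam (k + 1) ≤ mu k) (hlim : Tendsto lam atTop (𝓝 L)) :
    Summable fun k => lam k - mu k := by
  have hanti : Antitone lam := antitone_nat_of_succ_le fun k => (h2 k).trans (h1 k)
  refine summable_of_sum_range_le (c := lam 0 - L) (fun k => sub_nonneg.2 (h1 k)) fun n => ?_
  calc ∑ k ∈ Finset.range n, (lam k - mu k)
      ≤ ∑ k ∈ Finset.range n, (lam k - lam (k + 1)) :=
        Finset.sum_le_sum fun k _ => sub_le_sub_left (h2 k) _
    _ = lam 0 - lam n := Finset.sum_range_sub' lam n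
    _ ≤ lam 0 - L := sub_le_sub_left (hanti.le_of_tendsto hlim n) _

theorem div_sub_eq_one_add_div {𝕜 : Type*} [Field 𝕜] {z p q : 𝕜} (h : z ≠ p) :
    (z - q) / (z - p) = 1 + (p - q) / (z - p) := by
  rw [one_add_div (sub_ne_zero.2 h)]
  ring

section DivSubProduct

variable {p q : ℕ → ℂ}

theorem tendstoUniformlyOn_prod_range_div_sub (hpq : Summable fun k => ‖p k - q k‖)
    {K : Set ℂ} (hK : IsCompact K) (hKp : Disjoint K (closure (Set.range p))) :
    TendstoUniformlyOn (fun N z => ∏ k ∈ Finset.range N, (z - q k) / (z - p k))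
      (fun z => ∏' k, (z - q k) / (z - p k)) atTop K := by
  obtain ⟨δ, hδ, hδK⟩ := Metric.exists_pos_forall_lt_edist hK isClosed_closure hKp
  have hsep : ∀ z ∈ K, ∀ k, (δ : ℝ) ≤ ‖z - p k‖ := fun z hz k => by
    have := hδK z hz (p k) (subset_closure ⟨k, rfl⟩)
    rw [edist_nndist, ENNReal.coe_lt_coe, ← NNReal.coe_lt_coe, coe_nndist, dist_eq_norm] at this
    exact this.le
  have hne : ∀ z ∈ K, ∀ k, z ≠ p k := fun z hz k => hKp.ne_of_mem hz (subset_closure ⟨k, rfl⟩)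
  have hprod := (hpq.div_const δ).hasProdUniformlyOn_nat_one_add hK
    (f := fun k z => (p k - q k) / (z - p k))
    (Eventually.of_forall fun k z hz => by
      rw [norm_div]
      exact div_le_div_of_nonneg_left (norm_nonneg _) (NNReal.coe_pos.2 hδ) (hsep z hz k))
    fun k => continuousOn_const.div (continuousOn_id.sub continuousOn_const)
      fun z hz => sub_ne_zero.2 (hne z hz k)
  refine (hprod.tendstoUniformlyOn_finsetRange.congr ?_).congr_right ?_
  · exact Eventually.of_forall fun N z hz =>
      Finset.prod_congr rfl fun k _ => (div_sub_eq_one_add_div (hne z hz k)).symm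
  · exact fun z hz => tprod_congr fun k => (div_sub_eq_one_add_div (hne z hz k)).symm

theorem tendsto_tprod_div_sub_cobounded (hpq : Summable fun k => ‖p k - q k‖)
    (hp : Bornology.IsBounded (Set.range p)) :
    Tendsto (fun z => ∏' k, (z - q k) / (z - p k)) (Bornology.cobounded ℂ) (𝓝 1) := by
  obtain ⟨R, hR⟩ := hp.exists_norm_le
  have hfar : ∀ᶠ z in Bornology.cobounded ℂ, ∀ k, 1 ≤ ‖z - p k‖ := by
    filter_upwards [tendsto_norm_cobounded_atTop.eventually_ge_atTop (R + 1)] with z hz k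
    linarith [norm_sub_norm_le z (p k), hR (p k) ⟨k, rfl⟩]
  have hterm : ∀ k, Tendsto (fun z => (p k - q k) / (z - p k)) (Bornology.cobounded ℂ) (𝓝 0) :=
    fun k => by
      simpa [div_eq_mul_inv] using
        (tendsto_inv₀_cobounded.comp (tendsto_sub_const_cobounded (p k))).const_mul (p k - q k)
  have hlim := tendsto_tprod_one_add_of_dominated_convergence (g := 0) hpq hterm
    (hfar.mono fun z hz k => by
      rw [norm_div]
      exact div_le_self (norm_nonneg _) (hz k))
  simp only [Pi.zero_apply, add_zero, tprod_one] at hlim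
  refine hlim.congr' (hfar.mono fun z hz => tprod_congr fun k => ?_)
  exact (div_sub_eq_one_add_div fun h => absurd (hz k) (by simp [h])).symm

end DivSubProduct

theorem statement_14_general
    (lam mu : ℕ → ℝ)
    (h1 : ∀ k, mu k < lam k)
    (h2 : ∀ k, lam (k + 1) < mu k)
    (hlim : Tendsto lam atTop (nhds 0)) :
    ∃ Φ : ℂ → ℂ,
      (∀ K : Set ℂ, IsCompact K → K ⊆ (sigmaSet lam)ᶜ →
        TendstoUniformlyOn
          (fun (N : ℕ) (z : ℂ) =>
            ∏ k ∈ Finset.range N, (z - (mu k : ℂ)) / (z - (lam k : ℂ)))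
          Φ atTop K) ∧
      Tendsto Φ (Filter.comap norm atTop) (nhds 1) := by
  have hsum : Summable fun k => ‖(lam k : ℂ) - mu k‖ := by
    simpa [← Complex.ofReal_sub, abs_of_nonneg, (h1 _).le] using
      summable_sub_of_interlacing (fun k => (h1 k).le) (fun k => (h2 k).le) hlim
  have hlimC : Tendsto (fun k => (lam k : ℂ)) atTop (𝓝 0) := by
    simpa [Function.comp_def] using (Complex.continuous_ofReal.tendsto 0).comp hlim
  have hσ : IsClosed (sigmaSet lam) := hlimC.isCompact_insert_range.isClosed
  refine ⟨fun z => ∏' k, (z - mu k) / (z - lam k), fun K hK hKσ => ?_, ?_⟩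
  · refine tendstoUniformlyOn_prod_range_div_sub hsum hK ?_
    exact (Set.subset_compl_iff_disjoint_right.1 hKσ).mono_right
      (closure_minimal (Set.subset_insert _ _) hσ)
  · rw [comap_norm_atTop]
    exact tendsto_tprod_div_sub_cobounded hsum (Metric.isBounded_range_of_tendsto _ hlimC)

/-- Let `(λₖ²)`, `(μₖ²)` (here `lam`, `mu`) satisfy
`λ₁² > μ₁² > λ₂² > μ₂² > … > 0` with `λₖ² → 0`, and set `σ = {λₖ²} ∪ {0}`. Then the
partial products `Φ_N(z) = ∏_{k=1}^N (z − μₖ²)/(z − λₖ²)` converge uniformly on every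
compact subset of `ℂ∖σ` to a limit function `Φ`, and `Φ(z) → 1` as `z → ∞`. -/
theorem statement_14
    (lam mu : ℕ → ℝ)
    (hmu_pos : ∀ k, 0 < mu k)
    (h1 : ∀ k, mu k < lam k)
    (h2 : ∀ k, lam (k + 1) < mu k)
    (hlim : Tendsto lam atTop (nhds 0)) :
    ∃ Φ : ℂ → ℂ,
      (∀ K : Set ℂ, IsCompact K → K ⊆ (sigmaSet lam)ᶜ →
        TendstoUniformlyOn
          (fun (N : ℕ) (z : ℂ) =>
            ∏ k ∈ Finset.range N, (z - (mu k : ℂ)) / (z - (lam k : ℂ)))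
          Φ atTop K) ∧
      Tendsto Φ (Filter.comap norm atTop) (nhds 1) :=
  statement_14_general lam mu h1 h2 hlim
end

section
/- Let (λₖ²)ₖ≥₁ and (μₖ²)ₖ≥₁ satisfy λ₁² > μ₁² > λ₂² > μ₂² > … > 0 with λₖ² → 0, set σ = {λₖ² : k ≥ 1} ∪ {0}, and let Φ(z) = ∏ₖ≥₁ (z − μₖ²)/(z − λₖ²) for z ∈ ℂ∖σ. Then: (1) Φ(z̄) = conj(Φ(z)) for all z ∈ ℂ∖σ; in particular Φ is real on ℝ∖σ; (2) Φ extends meromorphically across each λₖ² with a simple pole there, and the zeros of Φ are exactly the points μₖ², each a simple zero; (3) Φ(z) → 1 as z → ∞; and (4) Im Φ(z) < 0 for every z in the open upper half-plane ℂ₊ = {z : Im z > 0}. -/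
open Filter Topology

/-!
Write `(z - μₖ) / (z - λₖ) = 1 + (λₖ - μₖ) / (z - λₖ)`. The intervals `[μₖ, λₖ]` are disjoint
in `(0, λ₀]`, so `∑ (λₖ - μₖ) ≤ λ₀` and the product converges locally uniformly off `σ`: this
gives analyticity, the limit `1` at infinity, and, after splitting off the `k`-th factor, the
simple pole at `λₖ` and the simple zero at `μₖ`.

For `Im z > 0` the angle `t ↦ arg (z - t)` is strictly increasing on `ℝ`, and
`Φ(z) = exp (∑ₖ log ((z - μₖ) / (z - λₖ)))` has argument
`∑ₖ (arg (z - μₖ) - arg (z - λₖ))`, a sum of negative angles subtended by the disjoint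
intervals `[μₖ, λₖ]`. It is bounded below by `-arg (z - λ₀) > -π`, so `Im Φ(z) < 0`.
-/

noncomputable def poleProd (c Λ : ℕ → ℂ) (z : ℂ) : ℂ :=
  ∏' k, (1 + c k / (z - Λ k))

/-- Only the poles of the nontrivial factors are required to lie in `S`, so that a factor can be
removed by setting its coefficient to `0`. -/
structure SummablePoles (c Λ : ℕ → ℂ) (S : Set ℂ) : Prop where
  summable : Summable fun k => ‖c k‖
  isClosed : IsClosed S
  mem : ∀ k, c k ≠ 0 → Λ k ∈ S

lemma one_add_sub_div_sub {z a b : ℂ} (h : z ≠ a) : 1 + (a - b) / (z - a) = (z - b) / (z - a) := by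
  field_simp [sub_ne_zero.2 h]
  ring

namespace poleProd

variable {c Λ : ℕ → ℂ} {S : Set ℂ}

lemma exists_pos_le_dist (hS : IsClosed S) {K : Set ℂ} (hK : IsCompact K) (hKS : K ⊆ Sᶜ) :
    ∃ δ > 0, ∀ z ∈ K, ∀ s ∈ S, δ ≤ dist z s := by
  obtain ⟨δ, hδ, hthick⟩ := hK.exists_thickening_subset_open hS.isOpen_compl hKS
  refine ⟨δ, hδ, fun z hz s hs => not_lt.1 fun hlt => hthick ?_ hs⟩
  exact Metric.mem_thickening_iff.2 ⟨z, hz, by rwa [dist_comm]⟩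

lemma norm_div_sub_le (hΛ : ∀ k, c k ≠ 0 → Λ k ∈ S) {δ : ℝ} (hδ : 0 < δ) {z : ℂ}
    (hz : ∀ s ∈ S, δ ≤ dist z s) (k : ℕ) : ‖c k / (z - Λ k)‖ ≤ ‖c k‖ / δ := by
  by_cases hck : c k = 0
  · simp [hck]
  rw [norm_div, ← dist_eq_norm]
  exact div_le_div_of_nonneg_left (norm_nonneg _) hδ (hz _ (hΛ k hck))

lemma differentiableOn_div_sub (hΛ : ∀ k, c k ≠ 0 → Λ k ∈ S) (k : ℕ) :
    DifferentiableOn ℂ (fun z => c k / (z - Λ k)) Sᶜ := by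
  by_cases hck : c k = 0
  · simp only [hck, zero_div]
    exact differentiableOn_const 0
  refine (differentiableOn_const _).div (differentiableOn_id.sub_const _) fun z hz h => ?_
  exact hz (sub_eq_zero.1 h ▸ hΛ k hck)

lemma tendsto_cobounded (hc : Summable fun k => ‖c k‖) {R : ℝ} (hR : ∀ k, ‖Λ k‖ ≤ R) :
    Tendsto (poleProd c Λ) (Bornology.cobounded ℂ) (𝓝 1) := by
  have hfar : ∀ᶠ z in Bornology.cobounded ℂ, ∀ k, 1 ≤ ‖z - Λ k‖ :=
    (tendsto_norm_cobounded_atTop.eventually_ge_atTop (R + 1)).mono fun z hz k => by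
      linarith [norm_sub_norm_le z (Λ k), hR k]
  have h := tendsto_tprod_one_add_of_dominated_convergence (f := fun z k => c k / (z - Λ k)) hc
    (fun k => by
      simpa [div_eq_mul_inv] using
        (tendsto_inv₀_cobounded.comp (tendsto_sub_const_cobounded (Λ k))).const_mul (c k))
    (hfar.mono fun z hz k => by
      rw [norm_div]
      exact div_le_self (norm_nonneg _) (hz k))
  simp only [add_zero, tprod_one] at h
  exact h

variable (h : SummablePoles c Λ S)
include h

lemma summable_norm_div_sub {z : ℂ} (hz : z ∉ S) : Summable fun k => ‖c k / (z - Λ k)‖ := by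
  obtain ⟨δ, hδ, hdist⟩ := exists_pos_le_dist h.isClosed isCompact_singleton
    (Set.singleton_subset_iff.2 hz)
  exact (h.summable.div_const δ).of_nonneg_of_le (fun _ => norm_nonneg _)
    (norm_div_sub_le h.mem hδ (hdist z rfl))

lemma hasProdLocallyUniformlyOn :
    HasProdLocallyUniformlyOn (fun k z => 1 + c k / (z - Λ k)) (poleProd c Λ) Sᶜ := by
  refine hasProdLocallyUniformlyOn_of_forall_compact h.isClosed.isOpen_compl
    fun K hKS hK => ?_
  obtain ⟨δ, hδ, hdist⟩ := exists_pos_le_dist h.isClosed hK hKS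
  exact (h.summable.div_const δ).hasProdUniformlyOn_one_add hK
    (.of_forall fun k z hz => norm_div_sub_le h.mem hδ (hdist z hz) k)
    fun k => (differentiableOn_div_sub h.mem k).continuousOn.mono hKS

lemma differentiableOn : DifferentiableOn ℂ (poleProd c Λ) Sᶜ := by
  refine (hasProdLocallyUniformlyOn h).tendstoLocallyUniformlyOn_finsetRange
    |>.differentiableOn (.of_forall fun N => ?_) h.isClosed.isOpen_compl
  exact DifferentiableOn.fun_finsetProd fun k _ =>
    (differentiableOn_const 1).add (differentiableOn_div_sub h.mem k)

lemma ne_zero {z : ℂ} (hz : z ∉ S) (hfac : ∀ k, 1 + c k / (z - Λ k) ≠ 0) :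
    poleProd c Λ z ≠ 0 :=
  tprod_one_add_ne_zero_of_summable hfac (summable_norm_div_sub h hz)

lemma eq_mul_update {z : ℂ} (hz : z ∉ S) (k : ℕ) :
    poleProd c Λ z = (1 + c k / (z - Λ k)) * poleProd (Function.update c k 0) Λ z := by
  have hfactor : ∀ j, 1 + Function.update c k 0 j / (z - Λ j)
      = if j = k then 1 else 1 + c j / (z - Λ j) := fun j => by
    by_cases hj : j = k <;> simp [hj]
  have hmul : Multipliable (Function.update (fun j => 1 + c j / (z - Λ j)) k 1) := by
    have hsummable : Summable fun j => ‖Function.update c k 0 j / (z - Λ j)‖ :=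
      (summable_norm_div_sub h hz).of_nonneg_of_le (fun _ => norm_nonneg _) fun j => by
        by_cases hj : j = k <;> simp [hj]; positivity
    convert multipliable_one_add_of_summable hsummable using 1
    ext j
    by_cases hj : j = k <;> simp [hj]
  rw [poleProd, hmul.tprod_eq_mul_tprod_ite' k, poleProd]
  simp only [hfactor]

end poleProd

namespace Complex

lemma arg_pos_of_im_pos {z : ℂ} (hz : 0 < z.im) : 0 < arg z :=
  (arg_nonneg_iff.2 hz.le).lt_of_ne fun h => hz.ne' (arg_eq_zero_iff.1 h.symm).2

lemma arg_lt_pi_of_im_pos {z : ℂ} (hz : 0 < z.im) : arg z < Real.pi :=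
  arg_lt_pi_iff.2 (Or.inr hz.ne')

lemma arg_div_of_im_pos {x y : ℂ} (hx : 0 < x.im) (hy : 0 < y.im) :
    arg (x / y) = arg x - arg y := by
  have hx₀ : x ≠ 0 := fun h => by simp [h] at hx
  have hy₀ : y ≠ 0 := fun h => by simp [h] at hy
  rw [← arg_coe_angle_toReal_eq_arg, arg_div_coe_angle hx₀ hy₀, ← Real.Angle.coe_sub,
    Real.Angle.toReal_coe_eq_self_iff_mem_Ioc]
  constructor <;> linarith [arg_pos_of_im_pos hx, arg_pos_of_im_pos hy, arg_le_pi x, arg_le_pi y]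

lemma strictMono_arg_sub_ofReal {z : ℂ} (hz : 0 < z.im) :
    StrictMono fun t : ℝ => arg (z - t) := by
  intro s t hst
  have hs : z - s ≠ 0 := fun h => hz.ne' (by simpa using congrArg im h)
  have him : ((z - t) / (z - s)).im = (t - s) * z.im / normSq (z - s) := by
    rw [div_im]
    simp only [sub_im, ofReal_im, sub_zero, sub_re, ofReal_re]
    ring
  have hpos : 0 < arg ((z - t) / (z - s)) := by
    refine arg_pos_of_im_pos ?_
    rw [him]
    exact div_pos (mul_pos (sub_pos.2 hst) hz) (normSq_pos.2 hs)
  rw [arg_div_of_im_pos (by simpa using hz) (by simpa using hz)] at hpos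
  linarith

end Complex

section sigmaSet

variable {lam : ℕ → ℝ} {z : ℂ}

lemma mem_sigmaSet_compl : z ∈ (sigmaSet lam)ᶜ ↔ z ≠ 0 ∧ ∀ k, z ≠ lam k := by
  simp [sigmaSet, eq_comm]

lemma ofReal_mem_sigmaSet (k : ℕ) : (lam k : ℂ) ∈ sigmaSet lam :=
  Set.mem_insert_of_mem _ ⟨k, rfl⟩

lemma isCompact_sigmaSet (hlim : Tendsto lam atTop (𝓝 0)) : IsCompact (sigmaSet lam) := by
  simpa [sigmaSet, Function.comp_def] using
    ((Complex.continuous_ofReal.tendsto 0).comp hlim).isCompact_insert_range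

lemma notMem_sigmaSet_of_im_pos (hz : 0 < z.im) : z ∉ sigmaSet lam := by
  rintro (h | ⟨k, rfl⟩) <;> simp_all

lemma conj_notMem_sigmaSet (hz : z ∉ sigmaSet lam) : starRingEnd ℂ z ∉ sigmaSet lam := by
  rw [← Set.mem_compl_iff, mem_sigmaSet_compl] at hz ⊢
  refine ⟨by simpa using hz.1, fun k h => hz.2 k ?_⟩
  simpa using congrArg (starRingEnd ℂ) h

end sigmaSet

noncomputable def interlacedProd (lam mu : ℕ → ℝ) : ℂ → ℂ :=
  poleProd (fun k => lam k - mu k) fun k => lam k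

namespace interlacedProd

variable {lam mu : ℕ → ℝ} (h1 : ∀ k, mu k < lam k) (h2 : ∀ k, lam (k + 1) < mu k)
include h1 h2

lemma strictAnti_lam : StrictAnti lam :=
  strictAnti_nat_of_succ_lt fun k => (h2 k).trans (h1 k)

lemma strictAnti_mu : StrictAnti mu :=
  strictAnti_nat_of_succ_lt fun k => (h1 (k + 1)).trans (h2 k)

lemma mu_ne_lam (k j : ℕ) : mu k ≠ lam j := by
  rcases le_or_gt j k with hjk | hkj
  · exact ((h1 k).trans_le ((strictAnti_lam h1 h2).antitone hjk)).ne
  · exact (((strictAnti_lam h1 h2).antitone hkj).trans_lt (h2 k)).ne'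

open Complex in
lemma tsum_arg_mem_Ioo {z : ℂ} (hz : 0 < z.im)
    (hsum : Summable fun k => arg (z - mu k) - arg (z - lam k)) :
    ∑' k, (arg (z - mu k) - arg (z - lam k)) ∈ Set.Ioo (-Real.pi) 0 := by
  have hmono := strictMono_arg_sub_ofReal hz
  have hzt : ∀ t : ℝ, 0 < (z - t).im := fun t => by simpa using hz
  have hpartial : ∀ N, -arg (z - lam 0) ≤
      ∑ k ∈ Finset.range N, (arg (z - mu k) - arg (z - lam k)) := fun N =>
    calc -arg (z - lam 0) ≤ arg (z - lam N) - arg (z - lam 0) := by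
          linarith [arg_pos_of_im_pos (hzt (lam N))]
      _ = ∑ k ∈ Finset.range N, (arg (z - lam (k + 1)) - arg (z - lam k)) :=
          (Finset.sum_range_sub (fun k => arg (z - lam k)) N).symm
      _ ≤ _ := Finset.sum_le_sum fun k _ => by linarith [(hmono (h2 k)).le]
  have hneg := hsum.neg.tsum_pos (fun k => by simp [(hmono (h1 k)).le]) 0
    (by simpa using hmono (h1 0))
  rw [tsum_neg] at hneg
  constructor
  · linarith [ge_of_tendsto' hsum.hasSum.tendsto_sum_nat hpartial,
      arg_lt_pi_of_im_pos (hzt (lam 0))]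
  · linarith

variable (hlim : Tendsto lam atTop (𝓝 0))
include hlim

lemma lam_nonneg (k : ℕ) : 0 ≤ lam k :=
  (strictAnti_lam h1 h2).antitone.le_of_tendsto hlim k

lemma mu_notMem_sigmaSet (k : ℕ) : (mu k : ℂ) ∉ sigmaSet lam := by
  rw [← Set.mem_compl_iff, mem_sigmaSet_compl]
  refine ⟨?_, fun j h => mu_ne_lam h1 h2 k j (by exact_mod_cast h)⟩
  exact_mod_cast ((lam_nonneg h1 h2 hlim (k + 1)).trans_lt (h2 k)).ne'

lemma summable_norm_coeff : Summable fun k => ‖(lam k : ℂ) - mu k‖ := by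
  have hgap : ∀ k, ‖(lam k : ℂ) - mu k‖ ≤ lam k - lam (k + 1) := fun k => by
    rw [← Complex.ofReal_sub, Complex.norm_real, Real.norm_of_nonneg (sub_pos.2 (h1 k)).le]
    linarith [h2 k]
  refine summable_of_sum_range_le (c := lam 0) (fun _ => norm_nonneg _) fun N => ?_
  calc ∑ k ∈ Finset.range N, ‖(lam k : ℂ) - mu k‖
      ≤ ∑ k ∈ Finset.range N, (lam k - lam (k + 1)) := Finset.sum_le_sum fun k _ => hgap k
    _ = lam 0 - lam N := Finset.sum_range_sub' lam N
    _ ≤ lam 0 := by linarith [lam_nonneg h1 h2 hlim N]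

lemma summablePoles :
    SummablePoles (fun k => lam k - mu k) (fun k => lam k) (sigmaSet lam) :=
  ⟨summable_norm_coeff h1 h2 hlim, (isCompact_sigmaSet hlim).isClosed,
    fun k _ => ofReal_mem_sigmaSet k⟩

lemma hasProd {z : ℂ} (hz : z ∉ sigmaSet lam) :
    HasProd (fun k => (z - mu k) / (z - lam k)) (interlacedProd lam mu z) :=
  ((poleProd.hasProdLocallyUniformlyOn (summablePoles h1 h2 hlim)).hasProd hz).congr_fun
    fun k => (one_add_sub_div_sub ((mem_sigmaSet_compl.1 hz).2 k)).symm

lemma differentiableOn : DifferentiableOn ℂ (interlacedProd lam mu) (sigmaSet lam)ᶜ :=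
  poleProd.differentiableOn (summablePoles h1 h2 hlim)

lemma map_conj {z : ℂ} (hz : z ∉ sigmaSet lam) :
    interlacedProd lam mu (starRingEnd ℂ z) = starRingEnd ℂ (interlacedProd lam mu z) := by
  refine (hasProd h1 h2 hlim (conj_notMem_sigmaSet hz)).unique ?_
  simpa [Function.comp_def, map_div₀] using
    (hasProd h1 h2 hlim hz).map (starRingEnd ℂ) Complex.continuous_conj

lemma ne_zero_of_ne_mu {z : ℂ} (hz : z ∉ sigmaSet lam) (hmu : ∀ k, z ≠ mu k) :
    interlacedProd lam mu z ≠ 0 := by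
  refine poleProd.ne_zero (summablePoles h1 h2 hlim) hz fun k => ?_
  have hlamk := (mem_sigmaSet_compl.1 hz).2 k
  rw [one_add_sub_div_sub hlamk]
  exact div_ne_zero (sub_ne_zero.2 (hmu k)) (sub_ne_zero.2 hlamk)

lemma exists_eq_mul (k : ℕ) : ∃ Ψ : ℂ → ℂ, ContinuousAt Ψ (lam k) ∧
    DifferentiableAt ℂ Ψ (mu k) ∧ Ψ (lam k) ≠ 0 ∧ Ψ (mu k) ≠ 0 ∧
    ∀ z ∉ sigmaSet lam, interlacedProd lam mu z = (z - mu k) / (z - lam k) * Ψ z := by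
  have hanti := strictAnti_lam h1 h2
  -- A closed set containing every pole but `λₖ`: only finitely many poles lie to its right.
  set S := (fun j => (lam j : ℂ)) '' Set.Iio k ∪ {w : ℂ | w.re ≤ lam (k + 1)}
  have hS : IsClosed S :=
    ((Set.finite_Iio k).image _).isClosed.union (isClosed_le Complex.continuous_re continuous_const)
  have hlamS : ∀ j ≠ k, (lam j : ℂ) ∈ S := by
    intro j hj
    rcases hj.lt_or_gt with hjk | hkj
    · exact Or.inl ⟨j, hjk, rfl⟩
    · exact Or.inr (by simpa using hanti.antitone hkj)
  have hlamk : (lam k : ℂ) ∉ S := by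
    rintro (⟨j, hjk, hj⟩ | hk)
    · exact hjk.ne (hanti.injective (Complex.ofReal_injective hj))
    · exact (hanti (Nat.lt_succ_self k)).not_ge (by simpa using hk)
  have hmuk : (mu k : ℂ) ∉ S := by
    rintro (⟨j, -, hj⟩ | hk)
    · exact mu_ne_lam h1 h2 k j (Complex.ofReal_injective hj.symm)
    · exact (h2 k).not_ge (by simpa using hk)
  set c' := Function.update (fun j => (lam j : ℂ) - mu j) k 0
  have hpoles : SummablePoles c' (fun j => lam j) S :=
    ⟨(summable_norm_coeff h1 h2 hlim).of_nonneg_of_le (fun _ => norm_nonneg _) fun j => by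
      by_cases hj : j = k <;> simp [c', hj],
    hS, fun j hj => hlamS j fun h => hj (by simp [c', h])⟩
  have hdiff := poleProd.differentiableOn hpoles
  have hne : ∀ w ∉ S, (∀ j ≠ k, w ≠ mu j) → poleProd c' (fun j => lam j) w ≠ 0 := by
    refine fun w hw hmu => poleProd.ne_zero hpoles hw fun j => ?_
    by_cases hj : j = k
    · simp [c', hj]
    have hwj : w ≠ lam j := fun h => hw (h ▸ hlamS j hj)
    rw [show c' j = lam j - mu j from Function.update_of_ne hj _ _, one_add_sub_div_sub hwj]
    exact div_ne_zero (sub_ne_zero.2 (hmu j hj)) (sub_ne_zero.2 hwj)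
  refine ⟨poleProd c' fun j => lam j,
    hdiff.continuousOn.continuousAt (hS.isOpen_compl.mem_nhds hlamk),
    hdiff.differentiableAt (hS.isOpen_compl.mem_nhds hmuk),
    hne _ hlamk fun j _ h => mu_ne_lam h1 h2 j k (by exact_mod_cast h.symm),
    hne _ hmuk fun j hj h => hj ((strictAnti_mu h1 h2).injective (by exact_mod_cast h.symm)),
    fun z hz => ?_⟩
  rw [interlacedProd, poleProd.eq_mul_update (summablePoles h1 h2 hlim) hz k,
    one_add_sub_div_sub ((mem_sigmaSet_compl.1 hz).2 k)]

lemma exists_tendsto_sub_lam_mul (k : ℕ) : ∃ c : ℂ, c ≠ 0 ∧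
    Tendsto (fun z => (z - lam k) * interlacedProd lam mu z)
      (𝓝[(sigmaSet lam)ᶜ] (lam k : ℂ)) (𝓝 c) := by
  obtain ⟨Ψ, hcont, -, hne, -, heq⟩ := exists_eq_mul h1 h2 hlim k
  have hmul : Tendsto (fun z => (z - mu k) * Ψ z) (𝓝 (lam k : ℂ))
      (𝓝 ((lam k - mu k) * Ψ (lam k))) :=
    ((continuousAt_id.sub continuousAt_const).mul hcont).tendsto
  refine ⟨_, mul_ne_zero (sub_ne_zero.2 ?_) hne, (hmul.mono_left nhdsWithin_le_nhds).congr'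
    (eventually_nhdsWithin_of_forall fun z hz => ?_)⟩
  · exact_mod_cast (mu_ne_lam h1 h2 k k).symm
  have := sub_ne_zero.2 ((mem_sigmaSet_compl.1 hz).2 k)
  dsimp only
  rw [heq z hz]
  field_simp

lemma apply_mu_eq_zero_and_deriv_ne_zero (k : ℕ) :
    interlacedProd lam mu (mu k) = 0 ∧ deriv (interlacedProd lam mu) (mu k) ≠ 0 := by
  obtain ⟨Ψ, -, hdiff, -, hne, heq⟩ := exists_eq_mul h1 h2 hlim k
  have hmem := mu_notMem_sigmaSet h1 h2 hlim k
  have hsub : (mu k : ℂ) - lam k ≠ 0 := sub_ne_zero.2 (by exact_mod_cast mu_ne_lam h1 h2 k k)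
  have hev : interlacedProd lam mu =ᶠ[𝓝 (mu k : ℂ)] fun z => (z - mu k) / (z - lam k) * Ψ z :=
    eventually_of_mem ((isCompact_sigmaSet hlim).isClosed.isOpen_compl.mem_nhds hmem) heq
  have hder := ((((hasDerivAt_id (mu k : ℂ)).sub_const (mu k : ℂ)).div
    ((hasDerivAt_id (mu k : ℂ)).sub_const (lam k : ℂ)) hsub).mul
    hdiff.hasDerivAt).congr_of_eventuallyEq hev
  refine ⟨by simp [heq _ hmem], ?_⟩
  rw [hder.deriv]
  simp only [id, Pi.div_apply, sub_self, zero_div, zero_mul, add_zero, sub_zero, one_mul]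
  exact mul_ne_zero (div_ne_zero hsub (pow_ne_zero _ hsub)) hne

lemma tendsto_cobounded : Tendsto (interlacedProd lam mu) (Bornology.cobounded ℂ) (𝓝 1) :=
  poleProd.tendsto_cobounded (summable_norm_coeff h1 h2 hlim) (R := lam 0) fun k => by
    rw [Complex.norm_real, Real.norm_of_nonneg (lam_nonneg h1 h2 hlim k)]
    exact (strictAnti_lam h1 h2).antitone (Nat.zero_le k)

open Complex in
lemma im_neg_of_im_pos {z : ℂ} (hz : 0 < z.im) : (interlacedProd lam mu z).im < 0 := by
  have hzt : ∀ t : ℝ, 0 < (z - t).im := fun t => by simpa using hz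
  have hne : ∀ t : ℝ, z - t ≠ 0 := fun t h => (hzt t).ne' (by rw [h, zero_im])
  have hfac : ∀ k, 1 + ((lam k : ℂ) - mu k) / (z - lam k) = (z - mu k) / (z - lam k) := fun k =>
    one_add_sub_div_sub (sub_ne_zero.1 (hne _))
  have hlog := summable_log_one_add_of_summable
    (poleProd.summable_norm_div_sub (summablePoles h1 h2 hlim)
      (notMem_sigmaSet_of_im_pos hz)).of_norm
  have harg : ∀ k, (log (1 + ((lam k : ℂ) - mu k) / (z - lam k))).im
      = arg (z - mu k) - arg (z - lam k) := fun k => by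
    rw [log_im, hfac, arg_div_of_im_pos (hzt _) (hzt _)]
  have hargsum := hlog.mapL imCLM
  simp only [imCLM_apply, harg] at hargsum
  obtain ⟨hlow, hneg⟩ := tsum_arg_mem_Ioo h1 h2 hz hargsum
  rw [interlacedProd, poleProd, ← cexp_tsum_eq_tprod
    (fun k => by rw [hfac]; exact div_ne_zero (hne _) (hne _)) hlog, exp_im, im_tsum hlog]
  simp only [harg]
  exact mul_neg_of_pos_of_neg (Real.exp_pos _) (Real.sin_neg_of_neg_of_neg_pi_lt hneg hlow)

end interlacedProd

theorem statement_15_general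
    (lam mu : ℕ → ℝ)
    (h1 : ∀ k, mu k < lam k)
    (h2 : ∀ k, lam (k + 1) < mu k)
    (hlim : Tendsto lam atTop (nhds 0))
    (Φ : ℂ → ℂ)
    (hΦ : ∀ z ∈ (sigmaSet lam)ᶜ,
      Tendsto (fun N : ℕ => ∏ k ∈ Finset.range N, (z - (mu k : ℂ)) / (z - (lam k : ℂ)))
        atTop (nhds (Φ z))) :
    (∀ z ∈ (sigmaSet lam)ᶜ, Φ ((starRingEnd ℂ) z) = (starRingEnd ℂ) (Φ z)) ∧
    (∀ x : ℝ, ((x : ℂ) ∈ (sigmaSet lam)ᶜ) → (Φ (x : ℂ)).im = 0) ∧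
    (DifferentiableOn ℂ Φ (sigmaSet lam)ᶜ) ∧
    (∀ k : ℕ, ∃ c : ℂ, c ≠ 0 ∧
      Tendsto (fun z : ℂ => (z - (lam k : ℂ)) * Φ z)
        (nhdsWithin ((lam k : ℂ)) (sigmaSet lam)ᶜ) (nhds c)) ∧
    (∀ k : ℕ, Φ ((mu k : ℂ)) = 0 ∧ deriv Φ ((mu k : ℂ)) ≠ 0) ∧
    (∀ z ∈ (sigmaSet lam)ᶜ, Φ z = 0 → ∃ k : ℕ, z = (mu k : ℂ)) ∧
    (Tendsto Φ (Filter.comap norm atTop) (nhds 1)) ∧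
    (∀ z : ℂ, 0 < z.im → (Φ z).im < 0) := by
  have hΦeq : Set.EqOn Φ (interlacedProd lam mu) (sigmaSet lam)ᶜ := fun z hz =>
    tendsto_nhds_unique (hΦ z hz) (interlacedProd.hasProd h1 h2 hlim hz).tendsto_prod_nat
  have hconj : ∀ z ∈ (sigmaSet lam)ᶜ, Φ (starRingEnd ℂ z) = starRingEnd ℂ (Φ z) := fun z hz => by
    rw [hΦeq hz, hΦeq (conj_notMem_sigmaSet hz), interlacedProd.map_conj h1 h2 hlim hz]
  refine ⟨hconj, fun x hx => ?_, (interlacedProd.differentiableOn h1 h2 hlim).congr hΦeq,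
    fun k => ?_, fun k => ?_, fun z hz h0 => ?_, ?_, fun z hz => ?_⟩
  · exact Complex.conj_eq_iff_im.1 (by simpa using (hconj x hx).symm)
  · obtain ⟨c, hc, hpole⟩ := interlacedProd.exists_tendsto_sub_lam_mul h1 h2 hlim k
    exact ⟨c, hc, hpole.congr' (eventually_nhdsWithin_of_forall fun z hz => by simp [hΦeq hz])⟩
  · have hmem := interlacedProd.mu_notMem_sigmaSet h1 h2 hlim k
    have hnhds : Φ =ᶠ[𝓝 (mu k : ℂ)] interlacedProd lam mu :=
      eventually_of_mem ((isCompact_sigmaSet hlim).isClosed.isOpen_compl.mem_nhds hmem) hΦeq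
    rw [hΦeq hmem, hnhds.deriv_eq]
    exact interlacedProd.apply_mu_eq_zero_and_deriv_ne_zero h1 h2 hlim k
  · by_contra! hmu
    exact interlacedProd.ne_zero_of_ne_mu h1 h2 hlim hz hmu (hΦeq hz ▸ h0)
  · rw [comap_norm_atTop]
    exact (interlacedProd.tendsto_cobounded h1 h2 hlim).congr' (eventually_of_mem
      (Bornology.isBounded_def.1 (isCompact_sigmaSet hlim).isBounded) fun z hz => (hΦeq hz).symm)
  · rw [hΦeq (notMem_sigmaSet_of_im_pos hz)]
    exact interlacedProd.im_neg_of_im_pos h1 h2 hlim hz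

/-- Let `(λₖ²)`, `(μₖ²)` (here `lam`, `mu`) satisfy
`λ₁² > μ₁² > λ₂² > μ₂² > … > 0` with `λₖ² → 0`, `σ = {λₖ²} ∪ {0}`, and let
`Φ(z) = ∏ₖ (z − μₖ²)/(z − λₖ²)` on `ℂ∖σ` (characterized as the pointwise limit of the
partial products). Then: (1) `Φ(z̄) = conj (Φ z)`, in particular `Φ` is real on `ℝ∖σ`;
(2) `Φ` is analytic on `ℂ∖σ`, has a simple pole at each `λₖ²` (meaning
`(z − λₖ²)Φ(z)` tends to a non-zero limit there) and its zeros are exactly the points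
`μₖ²`, each simple; (3) `Φ(z) → 1` as `z → ∞`; (4) `Im Φ(z) < 0` on the open upper
half-plane. -/
theorem statement_15
    (lam mu : ℕ → ℝ)
    (hmu_pos : ∀ k, 0 < mu k)
    (h1 : ∀ k, mu k < lam k)
    (h2 : ∀ k, lam (k + 1) < mu k)
    (hlim : Tendsto lam atTop (nhds 0))
    (Φ : ℂ → ℂ)
    (hΦ : ∀ z ∈ (sigmaSet lam)ᶜ,
      Tendsto (fun N : ℕ => ∏ k ∈ Finset.range N, (z - (mu k : ℂ)) / (z - (lam k : ℂ)))
        atTop (nhds (Φ z))) :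
    (∀ z ∈ (sigmaSet lam)ᶜ, Φ ((starRingEnd ℂ) z) = (starRingEnd ℂ) (Φ z)) ∧
    (∀ x : ℝ, ((x : ℂ) ∈ (sigmaSet lam)ᶜ) → (Φ (x : ℂ)).im = 0) ∧
    (DifferentiableOn ℂ Φ (sigmaSet lam)ᶜ) ∧
    (∀ k : ℕ, ∃ c : ℂ, c ≠ 0 ∧
      Tendsto (fun z : ℂ => (z - (lam k : ℂ)) * Φ z)
        (nhdsWithin ((lam k : ℂ)) (sigmaSet lam)ᶜ) (nhds c)) ∧
    (∀ k : ℕ, Φ ((mu k : ℂ)) = 0 ∧ deriv Φ ((mu k : ℂ)) ≠ 0) ∧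
    (∀ z ∈ (sigmaSet lam)ᶜ, Φ z = 0 → ∃ k : ℕ, z = (mu k : ℂ)) ∧
    (Tendsto Φ (Filter.comap norm atTop) (nhds 1)) ∧
    (∀ z : ℂ, 0 < z.im → (Φ z).im < 0) :=
  statement_15_general lam mu h1 h2 hlim Φ hΦ
end

section
/- Let (λₖ²)ₖ≥₁ and (μₖ²)ₖ≥₁ satisfy λ₁² > μ₁² > λ₂² > μ₂² > … > 0 with λₖ² → 0, and let aₙ = (λₙ² − μₙ²) · ∏_{k≠n} (λₙ² − μₖ²)/(λₙ² − λₖ²). Then ∏ₖ≥₁ (μₖ²/λₖ²) = 1 − ∑ₖ≥₁ aₖ/λₖ². Consequently, ∑ₖ≥₁ aₖ/λₖ² = 1 if and only if ∑ₖ≥₁ (1 − μₖ²/λₖ²) = ∞. -/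
open Filter Topology Polynomial Finset

lemma key_identity (lam mu : ℕ → ℝ) (N : ℕ)
    (hinj : Set.InjOn lam (Finset.range N))
    (hne : ∀ k ∈ Finset.range N, lam k ≠ 0) :
    ∑ n ∈ Finset.range N,
      ((lam n - mu n) * ∏ k ∈ (Finset.range N).erase n, (lam n - mu k) / (lam n - lam k)) / lam n
    = 1 - ∏ k ∈ Finset.range N, mu k / lam k := by
  set s := Finset.range N with hs
  set p : Polynomial ℝ := ∏ k ∈ s, (X - C (mu k)) with hp
  set q : Polynomial ℝ := ∏ k ∈ s, (X - C (lam k)) with hq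
  have hpm : p.Monic := monic_prod_of_monic _ _ fun k _ => monic_X_sub_C _
  have hqm : q.Monic := monic_prod_of_monic _ _ fun k _ => monic_X_sub_C _
  have hpd : p.natDegree = s.card := by
    rw [hp, natDegree_prod_of_monic _ _ fun k _ => monic_X_sub_C _]
    simp
  have hqd : q.natDegree = s.card := by
    rw [hq, natDegree_prod_of_monic _ _ fun k _ => monic_X_sub_C _]
    simp
  have hdeg : (p - q).degree < (s.card : WithBot ℕ) := by
    have h := degree_sub_lt (q := q)
      (by rw [degree_eq_natDegree hpm.ne_zero, degree_eq_natDegree hqm.ne_zero, hpd, hqd])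
      hpm.ne_zero (by rw [hpm.leadingCoeff, hqm.leadingCoeff])
    rwa [degree_eq_natDegree hpm.ne_zero, hpd] at h
  have hinterp := Lagrange.eq_interpolate (v := lam) (s := s) hinj hdeg
  have hev := congrArg (eval 0) hinterp
  have hlhs : eval 0 (p - q) = (∏ k ∈ s, (-mu k)) - ∏ k ∈ s, (-lam k) := by
    simp [hp, hq, eval_prod]
  have hval : ∀ i ∈ s, eval (lam i) (p - q) = ∏ k ∈ s, (lam i - mu k) := by
    intro i hi
    have hq0 : ∏ k ∈ s, (lam i - lam k) = 0 := Finset.prod_eq_zero hi (by simp)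
    simp [hp, hq, eval_prod, hq0]
  have hrhs : eval 0 (Lagrange.interpolate s lam fun i => eval (lam i) (p - q))
      = ∑ i ∈ s, (∏ k ∈ s, (lam i - mu k)) *
          ∏ j ∈ s.erase i, ((lam i - lam j)⁻¹ * (-lam j)) := by
    rw [Lagrange.interpolate_apply, eval_finset_sum]
    refine Finset.sum_congr rfl fun i hi => ?_
    rw [eval_mul, eval_C, hval i hi, Lagrange.basis, eval_prod]
    congr 1
    refine Finset.prod_congr rfl fun j hj => ?_
    simp [Lagrange.basisDivisor]
  rw [hlhs, hrhs] at hev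
  have hterm : ∀ i ∈ s, (∏ k ∈ s, (lam i - mu k)) *
      ∏ j ∈ s.erase i, ((lam i - lam j)⁻¹ * (-lam j))
      = -((((lam i - mu i) * ∏ k ∈ s.erase i, (lam i - mu k) / (lam i - lam k)) / lam i)
          * ∏ k ∈ s, (-lam k)) := by
    intro i hi
    have h1 : ∏ k ∈ s, (lam i - mu k) = (lam i - mu i) * ∏ k ∈ s.erase i, (lam i - mu k) :=
      (Finset.mul_prod_erase s _ hi).symm
    have h2 : ∏ k ∈ s, (-lam k) = (-lam i) * ∏ k ∈ s.erase i, (-lam k) :=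
      (Finset.mul_prod_erase s _ hi).symm
    have hcomb : (∏ k ∈ s.erase i, (lam i - mu k)) *
        ∏ j ∈ s.erase i, ((lam i - lam j)⁻¹ * (-lam j))
        = (∏ k ∈ s.erase i, (lam i - mu k) / (lam i - lam k)) * ∏ j ∈ s.erase i, (-lam j) := by
      rw [← Finset.prod_mul_distrib, ← Finset.prod_mul_distrib]
      exact Finset.prod_congr rfl fun j hj => by ring
    have hli : lam i ≠ 0 := hne i hi
    calc (∏ k ∈ s, (lam i - mu k)) * ∏ j ∈ s.erase i, ((lam i - lam j)⁻¹ * (-lam j))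
        = (lam i - mu i) * ((∏ k ∈ s.erase i, (lam i - mu k)) *
            ∏ j ∈ s.erase i, ((lam i - lam j)⁻¹ * (-lam j))) := by rw [h1]; ring
      _ = (lam i - mu i) * ((∏ k ∈ s.erase i, (lam i - mu k) / (lam i - lam k)) *
            ∏ j ∈ s.erase i, (-lam j)) := by rw [hcomb]
      _ = -((((lam i - mu i) * ∏ k ∈ s.erase i, (lam i - mu k) / (lam i - lam k)) / lam i)
          * ∏ k ∈ s, (-lam k)) := by
            rw [h2]
            generalize (∏ k ∈ s.erase i, (lam i - mu k) / (lam i - lam k)) = P3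
            generalize (∏ j ∈ s.erase i, (-lam j)) = P4
            field_simp
  rw [Finset.sum_congr rfl hterm] at hev
  have hQ : (∏ k ∈ s, (-lam k)) ≠ 0 :=
    Finset.prod_ne_zero_iff.mpr fun k hk => neg_ne_zero.mpr (hne k hk)
  have hprodrw : ∏ k ∈ s, mu k / lam k = (∏ k ∈ s, (-mu k)) / ∏ k ∈ s, (-lam k) := by
    rw [← Finset.prod_div_distrib]
    exact Finset.prod_congr rfl fun k _ => (neg_div_neg_eq _ _).symm
  rw [hprodrw]
  have hev2 : (∑ n ∈ s, ((lam n - mu n) *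
        ∏ k ∈ s.erase n, (lam n - mu k) / (lam n - lam k)) / lam n) * (∏ k ∈ s, (-lam k))
      = (∏ k ∈ s, (-lam k)) - ∏ k ∈ s, (-mu k) := by
    rw [Finset.sum_mul]
    rw [Finset.sum_neg_distrib] at hev
    linarith [hev]
  rw [eq_div_iff hQ] at *
  have := hev2
  field_simp at this ⊢
  linarith [hev2, this]
lemma weierstrass_lb (t : Finset ℕ) (f : ℕ → ℝ) (h0 : ∀ k ∈ t, 0 ≤ f k)
    (h1 : ∀ k ∈ t, f k ≤ 1) : 1 - ∑ k ∈ t, (1 - f k) ≤ ∏ k ∈ t, f k := by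
  classical
  induction t using Finset.induction_on with
  | empty => simp
  | @insert a s ha ih =>
    rw [Finset.sum_insert ha, Finset.prod_insert ha]
    have h0a := h0 _ (Finset.mem_insert_self a s)
    have h1a := h1 _ (Finset.mem_insert_self a s)
    have ih' := ih (fun k hk => h0 k (Finset.mem_insert_of_mem hk))
      (fun k hk => h1 k (Finset.mem_insert_of_mem hk))
    have hsnn : 0 ≤ ∑ k ∈ s, (1 - f k) :=
      Finset.sum_nonneg fun k hk => by linarith [h1 k (Finset.mem_insert_of_mem hk)]
    nlinarith

/-- Let `(λₖ²)`, `(μₖ²)` (here `lam`, `mu`) satisfy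
`λ₁² > μ₁² > λ₂² > μ₂² > … > 0` with `λₖ² → 0`, and let
`aₙ = (λₙ² − μₙ²)·∏_{k≠n} (λₙ² − μₖ²)/(λₙ² − λₖ²)` (characterized as the limit of the
partial products). Then `∑ₖ aₖ/λₖ²` converges and
`∏ₖ (μₖ²/λₖ²) = 1 − ∑ₖ aₖ/λₖ²` (the product interpreted as the limit, possibly `0`, of
partial products). Consequently `∑ₖ aₖ/λₖ² = 1` iff `∑ₖ (1 − μₖ²/λₖ²) = ∞` (divergence of
this nonnegative series expressed as non-summability). -/
theorem statement_18
    (lam mu : ℕ → ℝ)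
    (hmu_pos : ∀ k, 0 < mu k)
    (h1 : ∀ k, mu k < lam k)
    (h2 : ∀ k, lam (k + 1) < mu k)
    (hlim : Tendsto lam atTop (nhds 0))
    (a : ℕ → ℝ)
    (ha : ∀ n : ℕ,
      Tendsto (fun N : ℕ =>
          (lam n - mu n) *
            ∏ k ∈ (Finset.range N).erase n, (lam n - mu k) / (lam n - lam k))
        atTop (nhds (a n))) :
    Summable (fun k : ℕ => a k / lam k) ∧
    Tendsto (fun N : ℕ => ∏ k ∈ Finset.range N, mu k / lam k) atTop
      (nhds (1 - ∑' k : ℕ, a k / lam k)) ∧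
    ((∑' k : ℕ, a k / lam k) = 1 ↔ ¬ Summable (fun k : ℕ => 1 - mu k / lam k)) := by
  have hlam_pos : ∀ k, 0 < lam k := fun k => (hmu_pos k).trans (h1 k)
  have hanti : StrictAnti lam := strictAnti_nat_of_succ_lt fun n => (h2 n).trans (h1 n)
  have hmulam : ∀ m n : ℕ, m < n → lam n < mu m := fun m n h =>
    lt_of_le_of_lt (hanti.antitone h) (h2 m)
  set b : ℕ → ℕ → ℝ := fun n N =>
    (lam n - mu n) * ∏ k ∈ (Finset.range N).erase n, (lam n - mu k) / (lam n - lam k) with hb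
  have hfac_pos : ∀ n k, k ≠ n → 0 < (lam n - mu k) / (lam n - lam k) := by
    intro n k hkn
    rcases lt_or_gt_of_ne hkn with hk | hk
    · exact div_pos_of_neg_of_neg (by linarith [hmulam k n hk]) (by linarith [hanti hk])
    · exact div_pos (by linarith [hanti hk, h1 k]) (by linarith [hanti hk])
  have hfac_ge_one : ∀ n k, n < k → 1 ≤ (lam n - mu k) / (lam n - lam k) := by
    intro n k hk
    rw [one_le_div (by linarith [hanti hk])]
    linarith [h1 k]
  have hb_pos : ∀ n N, 0 < b n N := by
    intro n N
    exact mul_pos (by linarith [h1 n]) (Finset.prod_pos fun k hk =>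
      hfac_pos n k (Finset.mem_erase.mp hk).1)
  have hb_mono : ∀ n M N, n < M → M ≤ N → b n M ≤ b n N := by
    intro n M N hnM hMN
    have hsub : (Finset.range M).erase n ⊆ (Finset.range N).erase n :=
      Finset.erase_subset_erase _ (Finset.range_subset_range.mpr hMN)
    have hsd := Finset.prod_sdiff (f := fun k => (lam n - mu k) / (lam n - lam k)) hsub
    have hone : 1 ≤ ∏ k ∈ (Finset.range N).erase n \ (Finset.range M).erase n,
        (lam n - mu k) / (lam n - lam k) := by
      have := Finset.prod_le_prod (s := (Finset.range N).erase n \ (Finset.range M).erase n)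
        (f := fun _ => (1 : ℝ)) (g := fun k => (lam n - mu k) / (lam n - lam k))
        (fun k _ => zero_le_one) ?_
      · simpa using this
      · intro k hk
        rw [Finset.mem_sdiff, Finset.mem_erase, Finset.mem_range] at hk
        obtain ⟨⟨hkn, hkN⟩, hkM⟩ := hk
        have hMk : M ≤ k := by
          by_contra hc
          exact hkM (Finset.mem_erase.mpr ⟨hkn, Finset.mem_range.mpr (not_le.mp hc)⟩)
        exact hfac_ge_one n k (lt_of_lt_of_le hnM hMk)
    calc b n M ≤ b n M * ∏ k ∈ (Finset.range N).erase n \ (Finset.range M).erase n,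
          (lam n - mu k) / (lam n - lam k) := le_mul_of_one_le_right (hb_pos n M).le hone
      _ = b n N := by rw [hb]; dsimp only; rw [mul_assoc, mul_comm (∏ k ∈ (Finset.range M).erase n, _) _, hsd]
  have ha_ge : ∀ n M, n < M → b n M ≤ a n := by
    intro n M hnM
    exact ge_of_tendsto (ha n) (Filter.eventually_atTop.mpr ⟨M, fun N hN => hb_mono n M N hnM hN⟩)
  have ha_pos : ∀ n, 0 < a n := fun n =>
    lt_of_lt_of_le (hb_pos n (n + 1)) (ha_ge n (n + 1) (Nat.lt_succ_self n))
  set P : ℕ → ℝ := fun N => ∏ k ∈ Finset.range N, mu k / lam k with hPdef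
  have hr_pos : ∀ k, 0 < mu k / lam k := fun k => div_pos (hmu_pos k) (hlam_pos k)
  have hr_lt_one : ∀ k, mu k / lam k < 1 := fun k => (div_lt_one (hlam_pos k)).mpr (h1 k)
  have hP_pos : ∀ N, 0 < P N := fun N => Finset.prod_pos fun k _ => hr_pos k
  have hP_anti : Antitone P := antitone_nat_of_succ_le fun N => by
    rw [hPdef]; dsimp only
    rw [Finset.prod_range_succ]
    exact mul_le_of_le_one_right (hP_pos N).le (hr_lt_one N).le
  have hbdd : BddBelow (Set.range P) := ⟨0, fun x ⟨N, hN⟩ => hN ▸ (hP_pos N).le⟩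
  set L : ℝ := ⨅ N, P N with hLdef
  have hPlim : Tendsto P atTop (nhds L) := tendsto_atTop_ciInf hP_anti hbdd
  have hL_nonneg : 0 ≤ L := le_ciInf fun N => (hP_pos N).le
  have hid : ∀ N, ∑ n ∈ Finset.range N, b n N / lam n = 1 - P N := fun N =>
    key_identity lam mu N (hanti.injective.injOn) (fun k _ => (hlam_pos k).ne')
  have hnn : ∀ n, 0 ≤ a n / lam n := fun n => (div_pos (ha_pos n) (hlam_pos n)).le
  have hips : ∀ M, ∑ n ∈ Finset.range M, a n / lam n ≤ 1 - L := by
    intro M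
    have hfs : Tendsto (fun N => ∑ n ∈ Finset.range M, b n N / lam n) atTop
        (nhds (∑ n ∈ Finset.range M, a n / lam n)) :=
      tendsto_finset_sum _ fun n _ => (ha n).div_const (lam n)
    have hgs : Tendsto (fun N => 1 - P N) atTop (nhds (1 - L)) :=
      tendsto_const_nhds.sub hPlim
    refine le_of_tendsto_of_tendsto hfs hgs ?_
    filter_upwards [Filter.eventually_ge_atTop M] with N hMN
    calc ∑ n ∈ Finset.range M, b n N / lam n
        ≤ ∑ n ∈ Finset.range N, b n N / lam n :=
          Finset.sum_le_sum_of_subset_of_nonneg (Finset.range_subset_range.mpr hMN)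
            (fun k _ _ => (div_pos (hb_pos k N) (hlam_pos k)).le)
      _ = 1 - P N := hid N
  have hsummable : Summable (fun k : ℕ => a k / lam k) :=
    summable_of_sum_range_le hnn hips
  set S : ℝ := ∑' k : ℕ, a k / lam k with hSdef
  have hts_le : S ≤ 1 - L := Summable.tsum_le_of_sum_range_le hsummable hips
  have hle_ts : ∀ N, 1 - P N ≤ S := by
    intro N
    calc 1 - P N = ∑ n ∈ Finset.range N, b n N / lam n := (hid N).symm
      _ ≤ ∑ n ∈ Finset.range N, a n / lam n :=
          Finset.sum_le_sum fun n hn =>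
            div_le_div_of_nonneg_right (ha_ge n N (Finset.mem_range.mp hn)) (hlam_pos n).le
      _ ≤ S := Summable.sum_le_tsum _ (fun n _ => hnn n) hsummable
  have hL_ge : 1 - S ≤ L := le_ciInf fun N => by linarith [hle_ts N]
  have hS : S = 1 - L := le_antisymm hts_le (by linarith)
  refine ⟨hsummable, ?_, ?_⟩
  · have h1S : 1 - S = L := by linarith
    rw [h1S]
    exact hPlim
  · constructor
    · intro hS1 hsumm
      -- Summable (1 - r) implies L > 0
      set g : ℕ → ℝ := fun k => 1 - mu k / lam k with hgdef
      have hg_nonneg : ∀ k, 0 ≤ g k := fun k => by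
        have := hr_lt_one k; simp only [hgdef]; linarith
      have htail : Tendsto (fun K => ∑' j, g (j + K)) atTop (nhds 0) :=
        tendsto_sum_nat_add g
      obtain ⟨K, hK⟩ := (htail.eventually_lt_const (by norm_num : (0:ℝ) < 1/2)).exists
      have hsumK : Summable fun j => g (j + K) := (summable_nat_add_iff K).mpr hsumm
      have hIco : ∀ N, K ≤ N → ∑ k ∈ Finset.Ico K N, g k ≤ 1/2 := by
        intro N hKN
        rw [Finset.sum_Ico_eq_sum_range]
        calc ∑ i ∈ Finset.range (N - K), g (K + i)
            = ∑ i ∈ Finset.range (N - K), g (i + K) := by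
              refine Finset.sum_congr rfl fun i _ => by rw [add_comm]
          _ ≤ ∑' j, g (j + K) := Summable.sum_le_tsum _ (fun j _ => hg_nonneg _) hsumK
          _ ≤ 1/2 := hK.le
      have hPlb : ∀ N, K ≤ N → P K * (1/2) ≤ P N := by
        intro N hKN
        have hWl := weierstrass_lb (Finset.Ico K N) (fun k => mu k / lam k)
          (fun k _ => (hr_pos k).le) (fun k _ => (hr_lt_one k).le)
        have hsplit : P K * ∏ k ∈ Finset.Ico K N, mu k / lam k = P N :=
          Finset.prod_range_mul_prod_Ico _ hKN
        have h12 : (1:ℝ)/2 ≤ ∏ k ∈ Finset.Ico K N, mu k / lam k := by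
          have := hIco N hKN
          have hsum_eq : ∑ k ∈ Finset.Ico K N, (1 - mu k / lam k) = ∑ k ∈ Finset.Ico K N, g k :=
            rfl
          linarith [hWl, hsum_eq ▸ this]
        calc P K * (1/2) ≤ P K * ∏ k ∈ Finset.Ico K N, mu k / lam k :=
              mul_le_mul_of_nonneg_left h12 (hP_pos K).le
          _ = P N := hsplit
      have hL_ge2 : P K * (1/2) ≤ L :=
        ge_of_tendsto hPlim (Filter.eventually_atTop.mpr ⟨K, fun N hN => hPlb N hN⟩)
      have : 0 < L := lt_of_lt_of_le (mul_pos (hP_pos K) (by norm_num)) hL_ge2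
      rw [hS] at hS1
      linarith
    · intro hns
      set g : ℕ → ℝ := fun k => 1 - mu k / lam k with hgdef
      have hg_nonneg : ∀ k, 0 ≤ g k := fun k => by
        have := hr_lt_one k; simp only [hgdef]; linarith
      have htop : Tendsto (fun N => ∑ k ∈ Finset.range N, g k) atTop atTop :=
        (not_summable_iff_tendsto_nat_atTop_of_nonneg hg_nonneg).mp hns
      have hPN : ∀ N, P N ≤ Real.exp (-(∑ k ∈ Finset.range N, g k)) := by
        intro N
        have hle : P N ≤ ∏ k ∈ Finset.range N, Real.exp (mu k / lam k - 1) :=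
          Finset.prod_le_prod (fun k _ => (hr_pos k).le)
            (fun k _ => by
              have := Real.add_one_le_exp (mu k / lam k - 1)
              linarith)
        calc P N ≤ ∏ k ∈ Finset.range N, Real.exp (mu k / lam k - 1) := hle
          _ = Real.exp (∑ k ∈ Finset.range N, (mu k / lam k - 1)) := (Real.exp_sum _ _).symm
          _ = Real.exp (-(∑ k ∈ Finset.range N, g k)) := by
              congr 1
              rw [← Finset.sum_neg_distrib]
              exact Finset.sum_congr rfl fun k _ => by simp [hgdef]
      have hexp : Tendsto (fun N => Real.exp (-(∑ k ∈ Finset.range N, g k))) atTop (nhds 0) :=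
        Real.tendsto_exp_atBot.comp (tendsto_neg_atTop_atBot.comp htop)
      have hL_le0 : L ≤ 0 :=
        le_of_tendsto_of_tendsto hPlim hexp (Filter.Eventually.of_forall hPN)
      rw [hS]
      linarith
end

section
/- Let (λₖ²)ₖ≥₁ and (μₖ²)ₖ≥₁ satisfy λ₁² > μ₁² > λ₂² > μ₂² > … > 0 with λₖ² → 0. Then lim_{N→∞} (1/λ_N²) · ∏ₖ≥₁ (λ_N² + μₖ²)/(λ_N² + λₖ²) = ∞ if and only if ∑ₖ≥₁ (μₖ²/λₖ₊₁² − 1) = ∞. -/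
open Filter Topology

/-- Let `(λₖ²)`, `(μₖ²)` (here `lam`, `mu`) satisfy
`λ₁² > μ₁² > λ₂² > μ₂² > … > 0` with `λₖ² → 0`. For each `N` let
`P N = ∏ₖ (λ_N² + μₖ²)/(λ_N² + λₖ²)` (characterized as the limit of partial products;
every factor lies in `(0,1]` and the product converges). Then
`lim_{N→∞} (1/λ_N²)·P N = ∞` iff `∑ₖ (μₖ²/λₖ₊₁² − 1) = ∞` (divergence of this
nonnegative series expressed as non-summability). -/
theorem statement_19
    (lam mu : ℕ → ℝ)
    (hmu_pos : ∀ k, 0 < mu k)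
    (h1 : ∀ k, mu k < lam k)
    (h2 : ∀ k, lam (k + 1) < mu k)
    (hlim : Tendsto lam atTop (nhds 0))
    (P : ℕ → ℝ)
    (hP : ∀ N : ℕ,
      Tendsto (fun M : ℕ =>
          ∏ k ∈ Finset.range M, (lam N + mu k) / (lam N + lam k))
        atTop (nhds (P N))) :
    Tendsto (fun N : ℕ => P N / lam N) atTop atTop ↔
      ¬ Summable (fun k : ℕ => mu k / lam (k + 1) - 1) := by
  have hlam_pos : ∀ k, 0 < lam k := fun k => (hmu_pos k).trans (h1 k)
  have hanti : ∀ k, lam k ≤ lam 0 := by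
    intro k
    induction k with
    | zero => exact le_refl _
    | succ n ih => exact le_trans (le_of_lt ((h2 n).trans (h1 n))) ih
  set s : ℕ → ℝ := fun k => mu k / lam (k + 1) - 1 with hs_def
  have hs_nonneg : ∀ k, 0 ≤ s k := by
    intro k
    have : (1 : ℝ) ≤ mu k / lam (k + 1) := (one_le_div (hlam_pos (k+1))).2 (h2 k).le
    simp only [hs_def]
    linarith
  set T : ℕ → ℝ := fun M => ∏ k ∈ Finset.range M, mu k / lam (k + 1) with hT_def
  have hT_eq : ∀ M, T M = ∏ k ∈ Finset.range M, (1 + s k) := by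
    intro M
    simp [hT_def, hs_def]
  set R : ℕ → ℕ → ℝ := fun N M => ∏ k ∈ Finset.range M, (lam N + mu k) / (lam N + lam (k + 1))
    with hR_def
  set Q : ℕ → ℝ := fun N => P N * (lam N + lam 0) / lam N with hQ_def
  have hne : ∀ N M, lam N + lam M ≠ 0 := fun N M => (add_pos (hlam_pos N) (hlam_pos M)).ne'
  have hnemu : ∀ N k, lam N + mu k ≠ 0 := fun N k => (add_pos (hlam_pos N) (hmu_pos k)).ne'
  have key : ∀ N M, (lam N + lam 0) * ∏ k ∈ Finset.range M, (lam N + mu k) / (lam N + lam k)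
      = (lam N + lam M) * R N M := by
    intro N M
    induction M with
    | zero => simp [hR_def]
    | succ M ih =>
      rw [Finset.prod_range_succ, ← mul_assoc, ih]
      have hRs : R N (M + 1) = R N M * ((lam N + mu M) / (lam N + lam (M + 1))) := by
        simp only [hR_def]
        exact Finset.prod_range_succ _ _
      rw [hRs]
      have e1 := hne N M
      have e2 := hne N (M + 1)
      field_simp
  have hRQ : ∀ N, Tendsto (R N) atTop (nhds (Q N)) := by
    intro N
    have hfun : ∀ M, R N M = (∏ k ∈ Finset.range M, (lam N + mu k) / (lam N + lam k))
        * ((lam N + lam 0) / (lam N + lam M)) := by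
      intro M
      rw [← mul_div_assoc, eq_div_iff (hne N M)]
      linear_combination -key N M
    have hl : Tendsto (fun M => lam N + lam M) atTop (nhds (lam N)) := by
      have := (tendsto_const_nhds (x := lam N) (f := atTop)).add hlim
      simpa using this
    have hmain : Tendsto (fun M => (∏ k ∈ Finset.range M, (lam N + mu k) / (lam N + lam k))
        * ((lam N + lam 0) / (lam N + lam M))) atTop
        (nhds (P N * ((lam N + lam 0) / lam N))) :=
      (hP N).mul (tendsto_const_nhds.div hl (hlam_pos N).ne')
    have : Q N = P N * ((lam N + lam 0) / lam N) := by rw [hQ_def]; ring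
    rw [this]
    exact Tendsto.congr (fun M => (hfun M).symm) hmain
  have hR_one : ∀ N M, 1 ≤ R N M := by
    intro N M
    simp only [hR_def]
    have h1' : (1 : ℝ) = ∏ _k ∈ Finset.range M, (1 : ℝ) := by simp
    rw [h1']
    apply Finset.prod_le_prod
    · intro k _; exact zero_le_one
    · intro k _
      exact (one_le_div (add_pos (hlam_pos N) (hlam_pos (k+1)))).2 (by linarith [h2 k])
  have hR_mono : ∀ N, Monotone (R N) := by
    intro N
    apply monotone_nat_of_le_succ
    intro M
    have : R N (M + 1) = R N M * ((lam N + mu M) / (lam N + lam (M + 1))) := by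
      simp only [hR_def]; exact Finset.prod_range_succ _ _
    rw [this]
    have h1' : (1 : ℝ) ≤ (lam N + mu M) / (lam N + lam (M + 1)) :=
      (one_le_div (add_pos (hlam_pos N) (hlam_pos (M+1)))).2 (by linarith [h2 M])
    nlinarith [hR_one N M]
  have hRQle : ∀ N M, R N M ≤ Q N := fun N M => (hR_mono N).ge_of_tendsto (hRQ N) M
  have hQ_one : ∀ N, 1 ≤ Q N := fun N => le_trans (hR_one N 0) (hRQle N 0)
  have hPQ : ∀ N, P N / lam N = Q N / (lam N + lam 0) := by
    intro N
    have hq : Q N = P N / lam N * (lam N + lam 0) := by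
      simp only [hQ_def]; ring
    rw [hq, mul_div_cancel_right₀ _ (hne N 0)]
  have hRT : ∀ N M, R N M ≤ T M := by
    intro N M
    simp only [hR_def, hT_def]
    apply Finset.prod_le_prod
    · intro k _
      exact le_of_lt (div_pos (add_pos (hlam_pos N) (hmu_pos k))
        (add_pos (hlam_pos N) (hlam_pos (k + 1))))
    · intro k _
      rw [div_le_div_iff₀ (add_pos (hlam_pos N) (hlam_pos (k+1))) (hlam_pos (k+1))]
      nlinarith [h2 k, hlam_pos N, hlam_pos (k+1), hmu_pos k]
  constructor
  · intro htend hsum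
    have hbound : ∀ N, P N / lam N ≤ Real.exp (∑' k, s k) / lam 0 := by
      intro N
      have hTb : ∀ M, T M ≤ Real.exp (∑' k, s k) := by
        intro M
        rw [hT_eq]
        calc ∏ k ∈ Finset.range M, (1 + s k)
            ≤ ∏ k ∈ Finset.range M, Real.exp (s k) := by
              apply Finset.prod_le_prod
              · intro k _; linarith [hs_nonneg k]
              · intro k _; rw [add_comm]; exact Real.add_one_le_exp _
          _ = Real.exp (∑ k ∈ Finset.range M, s k) := (Real.exp_sum _ _).symm
          _ ≤ Real.exp (∑' k, s k) :=
              Real.exp_le_exp.2 (Summable.sum_le_tsum _ (fun k _ => hs_nonneg k) hsum)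
      have hQb : Q N ≤ Real.exp (∑' k, s k) :=
        le_of_tendsto (hRQ N) (Filter.Eventually.of_forall fun M => (hRT N M).trans (hTb M))
      rw [hPQ N]
      have h0 : lam 0 ≤ lam N + lam 0 := le_add_of_nonneg_left (hlam_pos N).le
      have hq0 : (0 : ℝ) ≤ Q N := le_trans zero_le_one (hQ_one N)
      calc Q N / (lam N + lam 0) ≤ Q N / lam 0 := by
            gcongr <;> linarith [hlam_pos N, hlam_pos 0]
        _ ≤ Real.exp (∑' k, s k) / lam 0 := by
            gcongr <;> linarith [hlam_pos 0]
    obtain ⟨N, hN⟩ := (htend.eventually_gt_atTop (Real.exp (∑' k, s k) / lam 0)).exists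
    exact absurd (hbound N) (not_le.2 hN)
  · intro hns
    have hsum_t : Tendsto (fun M => ∑ k ∈ Finset.range M, s k) atTop atTop :=
      (not_summable_iff_tendsto_nat_atTop_of_nonneg hs_nonneg).1 hns
    have hT_ge : ∀ M, 1 + ∑ k ∈ Finset.range M, s k ≤ T M := by
      intro M
      rw [hT_eq]
      induction M with
      | zero => simp
      | succ M ih =>
        rw [Finset.prod_range_succ, Finset.sum_range_succ]
        have hsum_nonneg : (0:ℝ) ≤ ∑ k ∈ Finset.range M, s k :=
          Finset.sum_nonneg (fun k _ => hs_nonneg k)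
        nlinarith [hs_nonneg M]
    have hT_t : Tendsto T atTop atTop :=
      tendsto_atTop_mono hT_ge (tendsto_atTop_add_const_left _ 1 hsum_t)
    have hQ_t : Tendsto Q atTop atTop := by
      rw [tendsto_atTop]
      intro A
      obtain ⟨M, hM⟩ := (hT_t.eventually_ge_atTop (A + 1)).exists
      have hRNM : Tendsto (fun N => R N M) atTop (nhds (T M)) := by
        have hfac : ∀ k ∈ Finset.range M,
            Tendsto (fun N => (lam N + mu k) / (lam N + lam (k + 1))) atTop
              (nhds (mu k / lam (k + 1))) := by
          intro k _
          have hnum : Tendsto (fun N => lam N + mu k) atTop (nhds (mu k)) := by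
            simpa using hlim.add (tendsto_const_nhds (x := mu k))
          have hden : Tendsto (fun N => lam N + lam (k + 1)) atTop (nhds (lam (k + 1))) := by
            simpa using hlim.add (tendsto_const_nhds (x := lam (k + 1)))
          exact hnum.div hden (hlam_pos (k + 1)).ne'
        simpa [hR_def, hT_def] using tendsto_finset_prod (Finset.range M) hfac
      have hA : ∀ᶠ N in atTop, A < R N M :=
        hRNM.eventually (eventually_gt_nhds (by linarith))
      filter_upwards [hA] with N hN
      exact hN.le.trans (hRQle N M)
    have h2l : Tendsto (fun N => Q N / (2 * lam 0)) atTop atTop :=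
      hQ_t.atTop_div_const (by linarith [hlam_pos 0])
    apply tendsto_atTop_mono _ h2l
    intro N
    rw [hPQ N]
    have hq0 : (0 : ℝ) ≤ Q N := le_trans zero_le_one (hQ_one N)
    gcongr <;> linarith [hlam_pos N, hlam_pos 0, hanti N]
end
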